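/- arXiv:1001.0897 — 9 statements merged into one kernel-verified Lean document; each statement's English description precedes it below -/
import Mathlib

section
/- Let d be a squarefree positive integer with d ≡ ±1 (mod 5), and let x = (x₁,x₂,x₃) ∈ ℤ³ with x₁² + x₂² + x₃² = d. Among the six vectors A·x, A⁻¹·x, B·x, B⁻¹·x, C·x, C⁻¹·x (which a priori lie in (1/5)ℤ³), exactly two have all integer coordinates. -/
open Matrix

noncomputable def LinnikA : Matrix (Fin 3) (Fin 3) ℚ :=
  (1 / 5 : ℚ) • !![5, 0, 0; 0, -4, 3; 0, -3, -4]

noncomputable def LinnikB : Matrix (Fin 3) (Fin 3) ℚ :=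
  (1 / 5 : ℚ) • !![-4, 0, 3; 0, 5, 0; -3, 0, -4]

noncomputable def LinnikC : Matrix (Fin 3) (Fin 3) ℚ :=
  (1 / 5 : ℚ) • !![-4, -3, 0; 3, -4, 0; 0, 0, 5]

/-- The six Linnik rotations `A, A⁻¹, B, B⁻¹, C, C⁻¹`. -/
noncomputable def linnikFamily : Fin 6 → Matrix (Fin 3) (Fin 3) ℚ :=
  ![LinnikA, LinnikA⁻¹, LinnikB, LinnikB⁻¹, LinnikC, LinnikC⁻¹]

/-! Each rotation `R` is `5⁻¹ • M` with `M` an integer matrix, and its inverse is `5⁻¹ • Mᵀ`,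
so `R x` is integral exactly when `M x ≡ 0 (mod 5)`. These congruences read
`x₁ ≡ ±2 x₂` for `A^{±1}`, `x₀ ≡ ±2 x₂` for `B^{±1}` and `x₀ ≡ ∓2 x₁` for `C^{±1}`; since
`-1 ≡ 2²`, each pair of them amounts to `xᵢ² + xⱼ² ≡ 0`, and when `x₀² + x₁² + x₂² ≡ ±1` a check
of the residues mod 5 shows that exactly two of the six congruences hold. -/

theorem inv_inv_smul_map_intCast_of_mul_transpose_eq {n : Type*} [Fintype n] [DecidableEq n]
    (M : Matrix n n ℤ) {m : ℤ} (hm : m ≠ 0) (h : M * Mᵀ = m ^ 2 • 1) :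
    ((m : ℚ)⁻¹ • M.map (Int.cast : ℤ → ℚ))⁻¹ = (m : ℚ)⁻¹ • Mᵀ.map Int.cast := by
  apply inv_eq_right_inv
  have hℚ : M.map (Int.cast : ℤ → ℚ) * Mᵀ.map Int.cast = (m : ℚ) ^ 2 • 1 := by
    have h' : (M * Mᵀ).map (Int.castRingHom ℚ) =
        (m ^ 2 • 1 : Matrix n n ℤ).map (Int.castRingHom ℚ) := by
      rw [h]
    rw [Matrix.map_mul] at h'
    rw [show (Int.cast : ℤ → ℚ) = Int.castRingHom ℚ from rfl, h']
    ext i j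
    simp only [Matrix.map_apply, Matrix.smul_apply, Matrix.one_apply]
    split_ifs <;> simp
  rw [smul_mul_smul_comm, hℚ, smul_smul]
  field_simp
  simp

theorem den_inv_smul_mulVec_eq_one_iff {m ι : Type*} [Fintype ι] (n : ℕ) [NeZero n]
    (M : Matrix m ι ℤ) (x : ι → ℤ) :
    (∀ i, ((((n : ℚ)⁻¹ • M.map (Int.cast : ℤ → ℚ)) *ᵥ fun j => (x j : ℚ)) i).den = 1) ↔
      M.map (Int.cast : ℤ → ZMod n) *ᵥ (fun j => (x j : ZMod n)) = 0 := by
  rw [funext_iff]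
  refine forall_congr' fun i => ?_
  have hℚ : (((n : ℚ)⁻¹ • M.map (Int.cast : ℤ → ℚ)) *ᵥ fun j => (x j : ℚ)) i
      = ((M *ᵥ x) i : ℤ) / ((n : ℤ) : ℚ) := by
    rw [smul_mulVec, Pi.smul_apply, smul_eq_mul, Int.cast_natCast, inv_mul_eq_div,
      ← eq_intCast (Int.castRingHom ℚ), RingHom.map_mulVec]
    rfl
  have hZMod : (M.map (Int.cast : ℤ → ZMod n) *ᵥ fun j => (x j : ZMod n)) i =
      ((M *ᵥ x) i : ℤ) := by
    rw [← eq_intCast (Int.castRingHom (ZMod n)), RingHom.map_mulVec]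
    rfl
  rw [hℚ, hZMod, Rat.den_div_intCast_eq_one_iff _ _ (by exact_mod_cast NeZero.ne n),
    Pi.zero_apply, ZMod.intCast_zmod_eq_zero_iff_dvd]

def linnikIntA : Matrix (Fin 3) (Fin 3) ℤ := !![5, 0, 0; 0, -4, 3; 0, -3, -4]

def linnikIntB : Matrix (Fin 3) (Fin 3) ℤ := !![-4, 0, 3; 0, 5, 0; -3, 0, -4]

def linnikIntC : Matrix (Fin 3) (Fin 3) ℤ := !![-4, -3, 0; 3, -4, 0; 0, 0, 5]

def linnikIntFamily : Fin 6 → Matrix (Fin 3) (Fin 3) ℤ :=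
  ![linnikIntA, linnikIntAᵀ, linnikIntB, linnikIntBᵀ, linnikIntC, linnikIntCᵀ]

theorem linnikA_eq : LinnikA = (5 : ℚ)⁻¹ • linnikIntA.map Int.cast := by
  ext i j
  fin_cases i <;> fin_cases j <;> norm_num [LinnikA, linnikIntA]

theorem linnikB_eq : LinnikB = (5 : ℚ)⁻¹ • linnikIntB.map Int.cast := by
  ext i j
  fin_cases i <;> fin_cases j <;> norm_num [LinnikB, linnikIntB]

theorem linnikC_eq : LinnikC = (5 : ℚ)⁻¹ • linnikIntC.map Int.cast := by
  ext i j
  fin_cases i <;> fin_cases j <;> norm_num [LinnikC, linnikIntC]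

theorem linnikFamily_eq (k : Fin 6) :
    linnikFamily k = (5 : ℚ)⁻¹ • (linnikIntFamily k).map Int.cast := by
  have inv_eq (M : Matrix (Fin 3) (Fin 3) ℤ) (h : M * Mᵀ = (5 : ℤ) ^ 2 • 1) :
      ((5 : ℚ)⁻¹ • M.map (Int.cast : ℤ → ℚ))⁻¹ = (5 : ℚ)⁻¹ • Mᵀ.map Int.cast := by
    exact_mod_cast inv_inv_smul_map_intCast_of_mul_transpose_eq M (by norm_num) h
  fin_cases k
  · exact linnikA_eq
  · exact (congrArg Inv.inv linnikA_eq).trans (inv_eq linnikIntA (by decide))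
  · exact linnikB_eq
  · exact (congrArg Inv.inv linnikB_eq).trans (inv_eq linnikIntB (by decide))
  · exact linnikC_eq
  · exact (congrArg Inv.inv linnikC_eq).trans (inv_eq linnikIntC (by decide))

set_option maxRecDepth 10000 in
theorem card_filter_linnikIntFamily_mulVec_eq_zero : ∀ v : Fin 3 → ZMod 5,
    v 0 ^ 2 + v 1 ^ 2 + v 2 ^ 2 = 1 ∨ v 0 ^ 2 + v 1 ^ 2 + v 2 ^ 2 = 4 →
    (Finset.univ.filter fun k => (linnikIntFamily k).map Int.cast *ᵥ v = 0).card = 2 := by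
  decide

theorem two_integral_neighbors_general (d : ℕ)
    (hd5 : d % 5 = 1 ∨ d % 5 = 4) (x : Fin 3 → ℤ)
    (hx : x 0 ^ 2 + x 1 ^ 2 + x 2 ^ 2 = (d : ℤ)) :
    (Finset.univ.filter fun k : Fin 6 =>
        ∀ i : Fin 3, (((linnikFamily k).mulVec fun j => (x j : ℚ)) i).den = 1).card = 2 := by
  have integral_iff (k : Fin 6) := den_inv_smul_mulVec_eq_one_iff 5 (linnikIntFamily k) x
  simp only [Nat.cast_ofNat] at integral_iff
  simp only [linnikFamily_eq, integral_iff]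
  apply card_filter_linnikIntFamily_mulVec_eq_zero
  have hx5 : (x 0 : ZMod 5) ^ 2 + (x 1 : ZMod 5) ^ 2 + (x 2 : ZMod 5) ^ 2 = d := by
    exact_mod_cast congrArg (Int.cast : ℤ → ZMod 5) hx
  rw [hx5, ← ZMod.natCast_mod]
  rcases hd5 with h | h <;> simp [h]

/-- For `d` squarefree with `d ≡ ±1 (mod 5)` and `x ∈ ℤ³` with `x·x = d`, exactly two of
the six vectors `A x, A⁻¹ x, B x, B⁻¹ x, C x, C⁻¹ x` have integer coordinates. -/
theorem two_integral_neighbors (d : ℕ) (hd : Squarefree d)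
    (hd5 : d % 5 = 1 ∨ d % 5 = 4) (x : Fin 3 → ℤ)
    (hx : x 0 ^ 2 + x 1 ^ 2 + x 2 ^ 2 = (d : ℤ)) :
    (Finset.univ.filter fun k : Fin 6 =>
        ∀ i : Fin 3, (((linnikFamily k).mulVec fun j => (x j : ℚ)) i).den = 1).card = 2 :=
  two_integral_neighbors_general d hd5 x hx
end

section
/- Every left ideal of the Hurwitz quaternion order B(ℤ) is principal: if I ⊆ B(ℚ) is a finitely generated left B(ℤ)-module, then I = B(ℤ)·q for some q ∈ B(ℚ). -/
/-- The Hurwitz order `ℤ[i, j, k, (1+i+j+k)/2]` inside the rational Hamilton quaternions. -/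
def Hurwitz : Set (Quaternion ℚ) :=
  {x | ∃ a b c d : ℤ, (a % 2 = b % 2 ∧ b % 2 = c % 2 ∧ c % 2 = d % 2) ∧
        x = ⟨(a : ℚ) / 2, (b : ℚ) / 2, (c : ℚ) / 2, (d : ℚ) / 2⟩}

/-!
In the basis `ω = (1 + i + j + k)/2, i, j, k` the Hurwitz quaternions are the integer
combinations, which makes `B(ℤ)` visibly a subring with integral reduced norms. Rounding the
coordinates of a rational quaternion lands within reduced norm `1` of `B(ℤ)`, and equality forces
every coordinate to be a half-odd integer, i.e. the quaternion itself to be Hurwitz; so `B(ℤ)` is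
left Euclidean. A finitely generated left ideal `I` has a common denominator `N`, so `N² · nrd` is
ℕ-valued on `I`, and a nonzero `q ∈ I` of least norm generates `I`: for `x ∈ I` and `h ∈ B(ℤ)`
closest to `x q⁻¹`, the remainder `x - h q ∈ I` has norm `nrd (x q⁻¹ - h) · nrd q < nrd q`.
-/

open Quaternion

theorem mem_Hurwitz_iff {x : ℍ[ℚ]} : x ∈ Hurwitz ↔ ∃ a b c d : ℤ,
    x.re = a / 2 ∧ x.imI = a / 2 + b ∧ x.imJ = a / 2 + c ∧ x.imK = a / 2 + d := by
  constructor
  · rintro ⟨a, b, c, d, ⟨hab, hbc, hcd⟩, rfl⟩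
    obtain ⟨b, rfl⟩ : ∃ b', b = a + 2 * b' := ⟨(b - a) / 2, by omega⟩
    obtain ⟨c, rfl⟩ : ∃ c', c = a + 2 * c' := ⟨(c - a) / 2, by omega⟩
    obtain ⟨d, rfl⟩ : ∃ d', d = a + 2 * d' := ⟨(d - a) / 2, by omega⟩
    refine ⟨a, b, c, d, ?_, ?_, ?_, ?_⟩ <;> push_cast <;> ring
  · rintro ⟨a, b, c, d, hre, hi, hj, hk⟩
    refine ⟨a, a + 2 * b, a + 2 * c, a + 2 * d, ⟨by omega, by omega, by omega⟩, ?_⟩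
    ext <;> push_cast <;> linarith

theorem mul_mem_Hurwitz {x y : ℍ[ℚ]} (hx : x ∈ Hurwitz) (hy : y ∈ Hurwitz) :
    x * y ∈ Hurwitz := by
  obtain ⟨a, b, c, d, hx₁, hx₂, hx₃, hx₄⟩ := mem_Hurwitz_iff.1 hx
  obtain ⟨e, f, g, h, hy₁, hy₂, hy₃, hy₄⟩ := mem_Hurwitz_iff.1 hy
  -- the coordinates of `x * y` in the basis `ω, i, j, k`
  refine mem_Hurwitz_iff.2
    ⟨-a * e - a * (f + g + h) - e * (b + c + d) - 2 * (b * f + c * g + d * h),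
    a * e + a * f + a * h + b * e + c * e + c * h - d * g + (b * f + c * g + d * h),
    a * e + a * f + a * g + c * e + d * e - b * h + d * f + (b * f + c * g + d * h),
    a * e + a * g + a * h + b * e + d * e + b * g - c * f + (b * f + c * g + d * h), ?_⟩
  simp only [re_mul, imI_mul, imJ_mul, imK_mul, hx₁, hx₂, hx₃, hx₄, hy₁, hy₂, hy₃, hy₄]
  push_cast
  refine ⟨?_, ?_, ?_, ?_⟩ <;> ring

def hurwitzOrder : Subring ℍ[ℚ] where
  carrier := Hurwitz
  mul_mem' := mul_mem_Hurwitz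
  one_mem' := mem_Hurwitz_iff.2 ⟨2, -1, -1, -1, by norm_num⟩
  add_mem' {x y} hx hy := by
    obtain ⟨a, b, c, d, hx₁, hx₂, hx₃, hx₄⟩ := mem_Hurwitz_iff.1 hx
    obtain ⟨e, f, g, h, hy₁, hy₂, hy₃, hy₄⟩ := mem_Hurwitz_iff.1 hy
    refine mem_Hurwitz_iff.2 ⟨a + e, b + f, c + g, d + h, ?_⟩
    simp only [re_add, imI_add, imJ_add, imK_add, hx₁, hx₂, hx₃, hx₄, hy₁, hy₂, hy₃, hy₄]
    push_cast
    refine ⟨?_, ?_, ?_, ?_⟩ <;> ring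
  zero_mem' := mem_Hurwitz_iff.2 ⟨0, 0, 0, 0, by simp⟩
  neg_mem' {x} hx := by
    obtain ⟨a, b, c, d, hx₁, hx₂, hx₃, hx₄⟩ := mem_Hurwitz_iff.1 hx
    refine mem_Hurwitz_iff.2 ⟨-a, -b, -c, -d, ?_⟩
    simp only [re_neg, imI_neg, imJ_neg, imK_neg, hx₁, hx₂, hx₃, hx₄]
    push_cast
    refine ⟨?_, ?_, ?_, ?_⟩ <;> ring

theorem mk_intCast_mem_hurwitzOrder (a b c d : ℤ) : (⟨a, b, c, d⟩ : ℍ[ℚ]) ∈ hurwitzOrder :=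
  mem_Hurwitz_iff.2 ⟨2 * a, b - a, c - a, d - a, by push_cast; refine ⟨?_, ?_, ?_, ?_⟩ <;> ring⟩

theorem exists_normSq_eq_natCast {x : ℍ[ℚ]} (hx : x ∈ hurwitzOrder) : ∃ m : ℕ, normSq x = m := by
  obtain ⟨a, b, c, d, hx₁, hx₂, hx₃, hx₄⟩ := mem_Hurwitz_iff.1 hx
  have hnorm : normSq x = ((a ^ 2 + a * (b + c + d) + b ^ 2 + c ^ 2 + d ^ 2 : ℤ) : ℚ) := by
    rw [normSq_def', hx₁, hx₂, hx₃, hx₄]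
    push_cast
    ring
  have hnonneg : 0 ≤ a ^ 2 + a * (b + c + d) + b ^ 2 + c ^ 2 + d ^ 2 := by
    exact_mod_cast hnorm ▸ normSq_nonneg
  lift a ^ 2 + a * (b + c + d) + b ^ 2 + c ^ 2 + d ^ 2 to ℕ using hnonneg with m
  exact ⟨m, by exact_mod_cast hnorm⟩

theorem sq_sub_round_le {α : Type*} [Field α] [LinearOrder α] [IsStrictOrderedRing α]
    [FloorRing α] (t : α) : (t - round t) ^ 2 ≤ 1 / 4 := by
  calc (t - round t) ^ 2 = |t - round t| ^ 2 := (sq_abs _).symm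
    _ ≤ (1 / 2) ^ 2 := by gcongr; exact abs_sub_round t
    _ = 1 / 4 := by norm_num

theorem exists_odd_eq_half_of_sq_eq {t : ℚ} (ht : t ^ 2 = 1 / 4) :
    ∃ m : ℤ, m % 2 = 1 ∧ t = m / 2 := by
  have : (t - 1 / 2) * (t + 1 / 2) = 0 := by linear_combination ht
  rcases mul_eq_zero.1 this with h | h
  · exact ⟨1, rfl, by push_cast; linarith⟩
  · exact ⟨-1, rfl, by push_cast; linarith⟩

theorem mem_hurwitzOrder_of_sq_eq {x : ℍ[ℚ]} (h₁ : x.re ^ 2 = 1 / 4) (h₂ : x.imI ^ 2 = 1 / 4)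
    (h₃ : x.imJ ^ 2 = 1 / 4) (h₄ : x.imK ^ 2 = 1 / 4) : x ∈ hurwitzOrder := by
  obtain ⟨a, ha, hx₁⟩ := exists_odd_eq_half_of_sq_eq h₁
  obtain ⟨b, hb, hx₂⟩ := exists_odd_eq_half_of_sq_eq h₂
  obtain ⟨c, hc, hx₃⟩ := exists_odd_eq_half_of_sq_eq h₃
  obtain ⟨d, hd, hx₄⟩ := exists_odd_eq_half_of_sq_eq h₄
  exact ⟨a, b, c, d, ⟨by omega, by omega, by omega⟩, by ext <;> assumption⟩

theorem exists_normSq_sub_lt_one (y : ℍ[ℚ]) : ∃ h ∈ hurwitzOrder, normSq (y - h) < 1 := by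
  set r : ℍ[ℚ] := ⟨round y.re, round y.imI, round y.imJ, round y.imK⟩
  have hr : r ∈ hurwitzOrder := mk_intCast_mem_hurwitzOrder _ _ _ _
  by_cases hlt : normSq (y - r) < 1
  · exact ⟨r, hr, hlt⟩
  have h₁ := sq_sub_round_le y.re
  have h₂ := sq_sub_round_le y.imI
  have h₃ := sq_sub_round_le y.imJ
  have h₄ := sq_sub_round_le y.imK
  rw [normSq_def'] at hlt
  -- otherwise every coordinate of `y - r` is `±1/2`
  have hyr : y - r ∈ hurwitzOrder := by
    apply mem_hurwitzOrder_of_sq_eq <;>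
      simp only [re_sub, imI_sub, imJ_sub, imK_sub] at hlt ⊢ <;> linarith
  exact ⟨y, by simpa using add_mem hyr hr, by simp⟩

theorem Rat.exists_intCast_eq_natCast_mul_of_den_dvd {t : ℚ} {N : ℕ} (h : t.den ∣ N) :
    ∃ z : ℤ, (N : ℚ) * t = z := by
  obtain ⟨k, rfl⟩ := h
  exact ⟨k * t.num, by push_cast; rw [mul_comm (t.den : ℚ), mul_assoc, Rat.den_mul_eq_num]⟩

theorem exists_natCast_mul_mem_hurwitzOrder (y : ℍ[ℚ]) :
    ∃ N : ℕ, N ≠ 0 ∧ (N : ℍ[ℚ]) * y ∈ hurwitzOrder := by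
  set N := y.re.den * y.imI.den * y.imJ.den * y.imK.den
  obtain ⟨z₁, h₁⟩ := Rat.exists_intCast_eq_natCast_mul_of_den_dvd (t := y.re) (N := N)
    (dvd_mul_of_dvd_left (dvd_mul_of_dvd_left (dvd_mul_right _ _) _) _)
  obtain ⟨z₂, h₂⟩ := Rat.exists_intCast_eq_natCast_mul_of_den_dvd (t := y.imI) (N := N)
    (dvd_mul_of_dvd_left (dvd_mul_of_dvd_left (dvd_mul_left _ _) _) _)
  obtain ⟨z₃, h₃⟩ := Rat.exists_intCast_eq_natCast_mul_of_den_dvd (t := y.imJ) (N := N)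
    (dvd_mul_of_dvd_left (dvd_mul_left _ _) _)
  obtain ⟨z₄, h₄⟩ := Rat.exists_intCast_eq_natCast_mul_of_den_dvd (t := y.imK) (N := N)
    (dvd_mul_left _ _)
  refine ⟨N, by positivity, ?_⟩
  rw [show (N : ℍ[ℚ]) * y = ⟨z₁, z₂, z₃, z₄⟩ by ext <;> simp [h₁, h₂, h₃, h₄]]
  exact mk_intCast_mem_hurwitzOrder z₁ z₂ z₃ z₄

theorem Quaternion.normSq_sub_mul_lt {R : Type*} [Field R] [LinearOrder R] [IsStrictOrderedRing R]
    {x q h : ℍ[R]} (hq : q ≠ 0) (hlt : normSq (x * q⁻¹ - h) < 1) :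
    normSq (x - h * q) < normSq q := by
  rw [show x - h * q = (x * q⁻¹ - h) * q by rw [sub_mul, inv_mul_cancel_right₀ hq], map_mul]
  exact mul_lt_of_lt_one_left (normSq_nonneg.lt_of_ne' (normSq_ne_zero.2 hq)) hlt

namespace Subring

variable {A : Type*} [Ring A] {S : Subring A}

theorem natCast_mul_mem_of_dvd {k N : ℕ} (hkN : k ∣ N) {y : A} (hy : (k : A) * y ∈ S) :
    (N : A) * y ∈ S := by
  obtain ⟨l, rfl⟩ := hkN
  rw [Nat.cast_mul, (Nat.cast_commute k (l : A)).eq, mul_assoc]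
  exact S.mul_mem (natCast_mem S l) hy

theorem mem_span_range_iff {ι : Type*} [Fintype ι] (g : ι → A) {x : A} :
    x ∈ Submodule.span S (Set.range g) ↔ ∃ c : ι → A, (∀ i, c i ∈ S) ∧ x = ∑ i, c i * g i := by
  rw [Submodule.mem_span_range_iff_exists_fun]
  constructor
  · rintro ⟨c, rfl⟩
    exact ⟨fun i => c i, fun i => (c i).2, rfl⟩
  · rintro ⟨c, hc, rfl⟩
    exact ⟨fun i => ⟨c i, hc i⟩, rfl⟩

theorem mem_span_singleton_iff {q x : A} :
    x ∈ Submodule.span S {q} ↔ ∃ h ∈ S, x = h * q := by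
  rw [Submodule.mem_span_singleton]
  constructor
  · rintro ⟨h, rfl⟩
    exact ⟨h, h.2, rfl⟩
  · rintro ⟨h, hh, rfl⟩
    exact ⟨⟨h, hh⟩, rfl⟩

theorem exists_natCast_mul_mem_of_fg (hS : ∀ y : A, ∃ N : ℕ, N ≠ 0 ∧ (N : A) * y ∈ S)
    {M : Submodule S A} (hM : M.FG) : ∃ N : ℕ, N ≠ 0 ∧ ∀ x ∈ M, (N : A) * x ∈ S := by
  obtain ⟨s, rfl⟩ := hM
  choose D hD₀ hD using hS
  refine ⟨∏ y ∈ s, D y, Finset.prod_ne_zero_iff.2 fun y _ => hD₀ y, fun x hx => ?_⟩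
  induction hx using Submodule.span_induction with
  | mem y hy => exact natCast_mul_mem_of_dvd (Finset.dvd_prod_of_mem D hy) (hD y)
  | zero => simp
  | add x y _ _ hx hy => simpa [mul_add] using S.add_mem hx hy
  | smul a x _ hx =>
    rw [smul_def, smul_eq_mul, ← mul_assoc, (Nat.cast_commute _ _).eq, mul_assoc]
    exact S.mul_mem a.2 hx

end Subring

theorem isPrincipal_of_natCast_mul_mem (M : Submodule hurwitzOrder ℍ[ℚ]) {N : ℕ} (hN : N ≠ 0)
    (hM : ∀ x ∈ M, (N : ℍ[ℚ]) * x ∈ hurwitzOrder) : M.IsPrincipal := by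
  classical
  rcases eq_or_ne M ⊥ with rfl | hM₀
  · exact bot_isPrincipal
  have hex : ∃ m : ℕ, ∃ x ∈ M, x ≠ 0 ∧ normSq ((N : ℍ[ℚ]) * x) = m := by
    obtain ⟨x, hx, hx₀⟩ := Submodule.exists_mem_ne_zero_of_ne_bot hM₀
    obtain ⟨m, hm⟩ := exists_normSq_eq_natCast (hM x hx)
    exact ⟨m, x, hx, hx₀, hm⟩
  obtain ⟨q, hq, hq₀, hqm⟩ := Nat.find_spec hex
  refine ⟨q, le_antisymm (fun x hx => ?_) ((Submodule.span_singleton_le_iff_mem _ _).2 hq)⟩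
  obtain ⟨h, hh, hlt⟩ := exists_normSq_sub_lt_one (x * q⁻¹)
  have hr : x - h * q ∈ M := M.sub_mem hx (M.smul_mem ⟨h, hh⟩ hq)
  suffices x - h * q = 0 from Subring.mem_span_singleton_iff.2 ⟨h, hh, sub_eq_zero.1 this⟩
  by_contra hr₀
  obtain ⟨m, hm⟩ := exists_normSq_eq_natCast (hM _ hr)
  have hmin := Nat.find_min' hex ⟨_, hr, hr₀, hm⟩
  have hN₀ : (0 : ℚ) < (N : ℚ) ^ 2 := by positivity
  have : normSq ((N : ℍ[ℚ]) * (x - h * q)) < normSq ((N : ℍ[ℚ]) * q) := by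
    simp only [map_mul, normSq_natCast]
    exact mul_lt_mul_of_pos_left (normSq_sub_mul_lt hq₀ hlt) hN₀
  rw [hm, hqm] at this
  exact absurd hmin (not_le.2 (by exact_mod_cast this))

/-- Every finitely generated left ideal of the Hurwitz order is principal: the left
`B(ℤ)`-module generated by finitely many quaternions `g₁, …, gₙ ∈ B(ℚ)` is of the form
`B(ℤ)·q` for some `q ∈ B(ℚ)`. -/
theorem hurwitz_left_ideals_principal (n : ℕ) (g : Fin n → Quaternion ℚ) :
    ∃ q : Quaternion ℚ,
      {x : Quaternion ℚ | ∃ c : Fin n → Quaternion ℚ,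
          (∀ i, c i ∈ Hurwitz) ∧ x = ∑ i, c i * g i} =
        {x : Quaternion ℚ | ∃ h ∈ Hurwitz, x = h * q} := by
  obtain ⟨N, hN, hNM⟩ := Subring.exists_natCast_mul_mem_of_fg exists_natCast_mul_mem_hurwitzOrder
    (Submodule.fg_span (Set.finite_range g))
  obtain ⟨q, hq⟩ := (isPrincipal_of_natCast_mul_mem _ hN hNM).principal
  refine ⟨q, Set.ext fun x => ?_⟩
  exact (Subring.mem_span_range_iff g).symm.trans (hq ▸ Subring.mem_span_singleton_iff)
end

section
/- Every Hurwitz quaternion of reduced norm 10 can be written as r·u, where u is a unit of the Hurwitz order B(ℤ) and r belongs to the set {1+3i, 1-3i, 1+3j, 1-3j, 1+3k, 1-3k}. -/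
open Quaternion

theorem Int.exists_sq_eq_eight_mul_add_one_of_odd {x : ℤ} (hx : Odd x) :
    ∃ t, x ^ 2 = 8 * t + 1 := by
  obtain ⟨m, rfl⟩ := hx
  obtain ⟨t, ht⟩ := Int.even_mul_succ_self m
  exact ⟨t, by linear_combination 4 * ht⟩

namespace Quaternion

/- A literal `⟨a, b, c, d⟩ : ℍ[ℤ]` elaborates at type `ℍ[ℤ,-1,0,-1]`, where `simp` and `rw` fail
to match lemmas about `ℍ[ℤ]`; building literals through this definition avoids that. -/
def lipschitz (a b c d : ℤ) : ℍ[ℤ] := ⟨a, b, c, d⟩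

def toRat (x : ℍ[ℤ]) : ℍ[ℚ] := ⟨x.re, x.imI, x.imJ, x.imK⟩

@[simp] theorem re_toRat (x : ℍ[ℤ]) : (toRat x).re = x.re := rfl
@[simp] theorem imI_toRat (x : ℍ[ℤ]) : (toRat x).imI = x.imI := rfl
@[simp] theorem imJ_toRat (x : ℍ[ℤ]) : (toRat x).imJ = x.imJ := rfl
@[simp] theorem imK_toRat (x : ℍ[ℤ]) : (toRat x).imK = x.imK := rfl

theorem toRat_mul (x y : ℍ[ℤ]) : toRat (x * y) = toRat x * toRat y := by
  ext <;> simp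

theorem toRat_star (x : ℍ[ℤ]) : toRat (star x) = star (toRat x) := by
  ext <;> simp

theorem normSq_toRat (x : ℍ[ℤ]) : normSq (toRat x) = normSq x := by
  simp [normSq_def']

theorem toRat_inv_mul (r y : ℍ[ℤ]) :
    (toRat r)⁻¹ * toRat y = ((normSq r : ℤ) : ℚ)⁻¹ • toRat (star r * y) := by
  rw [inv_def, smul_mul_assoc, toRat_mul, toRat_star, normSq_toRat]

end Quaternion

theorem mem_hurwitz_iff {x : ℍ[ℚ]} :
    x ∈ Hurwitz ↔ ∃ a b c d : ℤ, (a % 2 = b % 2 ∧ b % 2 = c % 2 ∧ c % 2 = d % 2) ∧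
      x.re = a / 2 ∧ x.imI = b / 2 ∧ x.imJ = c / 2 ∧ x.imK = d / 2 := by
  constructor
  · rintro ⟨a, b, c, d, hpar, rfl⟩
    exact ⟨a, b, c, d, hpar, rfl, rfl, rfl, rfl⟩
  · rintro ⟨a, b, c, d, hpar, h₁, h₂, h₃, h₄⟩
    exact ⟨a, b, c, d, hpar, by ext <;> assumption⟩

theorem star_mem_hurwitz {x : ℍ[ℚ]} (hx : x ∈ Hurwitz) : star x ∈ Hurwitz := by
  obtain ⟨a, b, c, d, ⟨hab, hbc, hcd⟩, h₁, h₂, h₃, h₄⟩ := mem_hurwitz_iff.mp hx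
  refine mem_hurwitz_iff.mpr ⟨a, -b, -c, -d, ⟨by omega, by omega, by omega⟩, ?_⟩
  simp [h₁, h₂, h₃, h₄, neg_div]

theorem exists_mul_eq_one_of_normSq_eq_one {u : ℍ[ℚ]} (hu : u ∈ Hurwitz) (h : normSq u = 1) :
    ∃ v ∈ Hurwitz, u * v = 1 ∧ v * u = 1 :=
  ⟨star u, star_mem_hurwitz hu, by rw [self_mul_star, h, coe_one],
    by rw [star_mul_self, h, coe_one]⟩

theorem exists_eq_toRat_of_mem_hurwitz {x : ℍ[ℚ]} (hx : x ∈ Hurwitz) {n : ℤ} (hn : Even n)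
    (h : normSq x = n) : ∃ y : ℍ[ℤ], x = toRat y := by
  obtain ⟨a, b, c, d, ⟨hab, hbc, hcd⟩, h₁, h₂, h₃, h₄⟩ := mem_hurwitz_iff.mp hx
  have hsum : a ^ 2 + b ^ 2 + c ^ 2 + d ^ 2 = 4 * n := by
    rw [normSq_def', h₁, h₂, h₃, h₄] at h
    exact_mod_cast (by linear_combination 4 * h :
      (a : ℚ) ^ 2 + (b : ℚ) ^ 2 + (c : ℚ) ^ 2 + (d : ℚ) ^ 2 = 4 * n)
  have ha : a % 2 = 0 := by
    by_contra hodd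
    have odd_of (z : ℤ) (hz : z % 2 = a % 2) : Odd z := Int.odd_iff.mpr (by omega)
    obtain ⟨t₁, ht₁⟩ := Int.exists_sq_eq_eight_mul_add_one_of_odd (odd_of a rfl)
    obtain ⟨t₂, ht₂⟩ := Int.exists_sq_eq_eight_mul_add_one_of_odd (odd_of b hab.symm)
    obtain ⟨t₃, ht₃⟩ := Int.exists_sq_eq_eight_mul_add_one_of_odd (odd_of c (by omega))
    obtain ⟨t₄, ht₄⟩ := Int.exists_sq_eq_eight_mul_add_one_of_odd (odd_of d (by omega))
    obtain ⟨m, rfl⟩ := hn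
    omega
  have half (z : ℤ) (hz : z % 2 = 0) : ((z / 2 : ℤ) : ℚ) = z / 2 :=
    Int.cast_div (Int.dvd_of_emod_eq_zero hz) (by norm_num)
  refine ⟨lipschitz (a / 2) (b / 2) (c / 2) (d / 2), ?_⟩
  ext
  · exact h₁.trans (half a ha).symm
  · exact h₂.trans (half b (by omega)).symm
  · exact h₃.trans (half c (by omega)).symm
  · exact h₄.trans (half d (by omega)).symm

/-- `z ∈ 10 B(ℤ)`: the coordinates of `z` are `5` times integers of one parity. -/
def MemTenHurwitz (z : ℍ[ℤ]) : Prop :=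
  z.re % 5 = 0 ∧ z.re % 10 = z.imI % 10 ∧ z.imI % 10 = z.imJ % 10 ∧ z.imJ % 10 = z.imK % 10

instance : DecidablePred MemTenHurwitz := fun _ => inferInstanceAs (Decidable (_ ∧ _))

theorem inv_ten_smul_toRat_mem_hurwitz {z : ℍ[ℤ]} (hz : MemTenHurwitz z) :
    (10 : ℚ)⁻¹ • toRat z ∈ Hurwitz := by
  obtain ⟨h5, h₁, h₂, h₃⟩ := hz
  obtain ⟨a, ha⟩ : (5 : ℤ) ∣ z.re := by omega
  obtain ⟨b, hb⟩ : (5 : ℤ) ∣ z.imI := by omega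
  obtain ⟨c, hc⟩ : (5 : ℤ) ∣ z.imJ := by omega
  obtain ⟨d, hd⟩ : (5 : ℤ) ∣ z.imK := by omega
  refine mem_hurwitz_iff.mpr ⟨a, b, c, d, ⟨by omega, by omega, by omega⟩, ?_⟩
  simp only [re_smul, imI_smul, imJ_smul, imK_smul, re_toRat, imI_toRat, imJ_toRat, imK_toRat,
    smul_eq_mul, ha, hb, hc, hd]
  push_cast
  refine ⟨?_, ?_, ?_, ?_⟩ <;> ring

def normTenGenerators : List ℍ[ℤ] :=
  [lipschitz 1 3 0 0, lipschitz 1 (-3) 0 0, lipschitz 1 0 3 0, lipschitz 1 0 (-3) 0,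
    lipschitz 1 0 0 3, lipschitz 1 0 0 (-3)]

theorem normSq_of_mem_normTenGenerators : ∀ r ∈ normTenGenerators, normSq r = 10 := by
  decide

theorem toRat_of_mem_normTenGenerators {r : ℍ[ℤ]} (hr : r ∈ normTenGenerators) :
    toRat r = ⟨1, 3, 0, 0⟩ ∨ toRat r = ⟨1, -3, 0, 0⟩ ∨ toRat r = ⟨1, 0, 3, 0⟩ ∨
      toRat r = ⟨1, 0, -3, 0⟩ ∨ toRat r = ⟨1, 0, 0, 3⟩ ∨ toRat r = ⟨1, 0, 0, -3⟩ := by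
  simp only [normTenGenerators, List.mem_cons, List.not_mem_nil, or_false] at hr
  rcases hr with rfl | rfl | rfl | rfl | rfl | rfl <;> tauto

theorem exists_memTenHurwitz_star_mul {y : ℍ[ℤ]} (hy : normSq y = 10) :
    ∃ r ∈ normTenGenerators, MemTenHurwitz (star r * y) := by
  have hcases : ∀ a ∈ Finset.Icc (-3 : ℤ) 3, ∀ b ∈ Finset.Icc (-3 : ℤ) 3,
      ∀ c ∈ Finset.Icc (-3 : ℤ) 3, ∀ d ∈ Finset.Icc (-3 : ℤ) 3,
        a ^ 2 + b ^ 2 + c ^ 2 + d ^ 2 = 10 →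
          ∃ r ∈ normTenGenerators, MemTenHurwitz (star r * lipschitz a b c d) := by
    decide
  rw [normSq_def'] at hy
  have bound (z : ℤ) (hz : z ^ 2 ≤ 10) : z ∈ Finset.Icc (-3 : ℤ) 3 :=
    Finset.mem_Icc.mpr ⟨by nlinarith, by nlinarith⟩
  exact hcases _ (bound _ (by nlinarith)) _ (bound _ (by nlinarith)) _ (bound _ (by nlinarith))
    _ (bound _ (by nlinarith)) hy

/-- Every Hurwitz quaternion of reduced norm `10` is of the form `r·u` with `u` a unit of
the Hurwitz order and `r ∈ {1 ± 3i, 1 ± 3j, 1 ± 3k}`. -/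
theorem norm_ten_factorization (x : Quaternion ℚ) (hx : x ∈ Hurwitz)
    (hnorm : Quaternion.normSq x = 10) :
    ∃ r u : Quaternion ℚ,
      (r = ⟨1, 3, 0, 0⟩ ∨ r = ⟨1, -3, 0, 0⟩ ∨ r = ⟨1, 0, 3, 0⟩ ∨ r = ⟨1, 0, -3, 0⟩ ∨
        r = ⟨1, 0, 0, 3⟩ ∨ r = ⟨1, 0, 0, -3⟩) ∧
      u ∈ Hurwitz ∧ (∃ v ∈ Hurwitz, u * v = 1 ∧ v * u = 1) ∧ x = r * u := by
  obtain ⟨y, rfl⟩ :=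
    exists_eq_toRat_of_mem_hurwitz hx (n := 10) (by decide) (by exact_mod_cast hnorm)
  have hy : normSq y = 10 := by exact_mod_cast (normSq_toRat y).symm.trans hnorm
  obtain ⟨r, hr, hry⟩ := exists_memTenHurwitz_star_mul hy
  have hr10 : normSq (toRat r) = 10 := by
    rw [normSq_toRat, normSq_of_mem_normTenGenerators r hr]; norm_num
  have hr0 : toRat r ≠ 0 := normSq_ne_zero.mp (by rw [hr10]; norm_num)
  have hu : (toRat r)⁻¹ * toRat y ∈ Hurwitz := by
    rw [toRat_inv_mul, normSq_of_mem_normTenGenerators r hr]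
    exact_mod_cast inv_ten_smul_toRat_mem_hurwitz hry
  refine ⟨toRat r, _, toRat_of_mem_normTenGenerators hr, hu,
    exists_mul_eq_one_of_normSq_eq_one hu ?_, (mul_inv_cancel_left₀ hr0 _).symm⟩
  rw [map_mul, map_inv₀, hr10, hnorm]
  norm_num
end

section
/- Let p be an odd prime and d ∈ ℤ_p with p ∤ d. Then the group SL₂(ℤ_p), acting by conjugation, acts transitively on the set of matrices in M₂(ℤ_p) with trace 0 and determinant d. -/
/-!
Write `x = !![b, a; c, -b]`. For `v = (s, t)`, the matrix with columns `x v` and `v` conjugates `x`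
to `!![0, 1; -det x, 0]` (because `x² = -det x`), and its determinant is the binary form
`a t² + 2 b s t - c s²`, of unit discriminant. Over `𝔽_p` this form represents `1`. Lifting such
a solution to `ℤ_p` gives a value `q ≡ 1 mod p`, and by Hensel's lemma `q ν² = 1` for some `ν`;
replacing `v` by `ν v` makes the determinant exactly `1`. Hence every trace-zero matrix of
determinant `d` is `SL₂(ℤ_p)`-conjugate to `!![0, 1; -d, 0]`.
-/

open Matrix Polynomial

namespace PadicInt

variable {p : ℕ} [Fact p.Prime]

theorem isUnit_iff_toZMod_ne_zero {z : ℤ_[p]} : IsUnit z ↔ toZMod z ≠ 0 := by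
  rw [← IsLocalRing.notMem_maximalIdeal, ← ker_toZMod, RingHom.mem_ker]

theorem isUnit_iff_not_dvd {z : ℤ_[p]} : IsUnit z ↔ ¬ (p : ℤ_[p]) ∣ z := by
  rw [← norm_lt_one_iff_dvd, ← not_isUnit_iff, not_not]

theorem exists_mul_sq_eq_one_of_toZMod_eq_one (hp : p ≠ 2) {q : ℤ_[p]} (hq : toZMod q = 1) :
    ∃ ν : ℤ_[p], q * ν ^ 2 = 1 := by
  have heval : (C q * X ^ 2 - 1).aeval (1 : ℤ_[p]) = q - 1 := by simp
  have hderiv : (C q * X ^ 2 - 1).derivative.aeval (1 : ℤ_[p]) = q * 2 := by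
    simp [one_add_one_eq_two]
  have hlt : ‖q - 1‖ < 1 := by
    rw [← not_isUnit_iff, isUnit_iff_toZMod_ne_zero, not_not, map_sub, hq, map_one, sub_self]
  have hone : ‖q * 2‖ = 1 := by
    rw [← isUnit_iff, isUnit_iff_toZMod_ne_zero, map_mul, hq, one_mul, map_ofNat]
    exact Ring.two_ne_zero (by rwa [ZMod.ringChar_zmod_n])
  obtain ⟨ν, hν, -⟩ := hensels_lemma (by rwa [heval, hderiv, hone, one_pow])
  exact ⟨ν, by simpa [sub_eq_zero] using hν⟩

end PadicInt

theorem FiniteField.exists_binary_form_eq_one {F : Type*} [Field F] [Fintype F]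
    (hF : ringChar F ≠ 2) {a b c : F} (h : b ^ 2 + a * c ≠ 0) :
    ∃ s t : F, a * t ^ 2 + 2 * b * s * t - c * s ^ 2 = 1 := by
  by_cases ha : a = 0
  · subst ha
    have hb : b ≠ 0 := by rintro rfl; simp at h
    refine ⟨1, (1 + c) / (2 * b), ?_⟩
    field_simp [Ring.two_ne_zero hF]
    ring
  · -- `a (a t² + 2 b s t - c s²) = (a t + b s)² - (b² + a c) s²`
    obtain ⟨u, s, hus⟩ := FiniteField.exists_root_sum_quadratic
      (f := X ^ 2 - C a) (g := C (-(b ^ 2 + a * c)) * X ^ 2)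
      (by compute_degree!) (by compute_degree!; exact fun h' => h (by linear_combination -h'))
      (FiniteField.odd_card_of_char_ne_two hF)
    simp only [eval_sub, eval_mul, eval_pow, eval_C, eval_X] at hus
    refine ⟨s, (u - b * s) / a, ?_⟩
    field_simp
    linear_combination hus

theorem PadicInt.exists_binary_form_eq_one {p : ℕ} [Fact p.Prime] (hp : p ≠ 2)
    {a b c : ℤ_[p]} (h : IsUnit (b ^ 2 + a * c)) :
    ∃ s t : ℤ_[p], a * t ^ 2 + 2 * b * s * t - c * s ^ 2 = 1 := by
  obtain ⟨σ, τ, hστ⟩ := FiniteField.exists_binary_form_eq_one (F := ZMod p)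
    (by rwa [ZMod.ringChar_zmod_n]) (by simpa using isUnit_iff_toZMod_ne_zero.mp h)
  obtain ⟨s, rfl⟩ := ZMod.ringHom_surjective toZMod σ
  obtain ⟨t, rfl⟩ := ZMod.ringHom_surjective toZMod τ
  obtain ⟨ν, hν⟩ := exists_mul_sq_eq_one_of_toZMod_eq_one hp
    (q := a * t ^ 2 + 2 * b * s * t - c * s ^ 2) (by simpa [map_ofNat] using hστ)
  exact ⟨s * ν, t * ν, by linear_combination hν⟩

theorem Matrix.exists_det_eq_one_mul_eq_mul_of_trace_eq_zero {R : Type*} [CommRing R]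
    {x : Matrix (Fin 2) (Fin 2) R} (hx : x.trace = 0) {s t : R}
    (hst : x 0 1 * t ^ 2 + 2 * x 0 0 * s * t - x 1 0 * s ^ 2 = 1) :
    ∃ G : Matrix (Fin 2) (Fin 2) R, G.det = 1 ∧ x * G = G * !![0, 1; -x.det, 0] := by
  have h11 : x 1 1 = -x 0 0 := by rw [trace_fin_two] at hx; linear_combination hx
  refine ⟨!![x 0 0 * s + x 0 1 * t, s; x 1 0 * s + x 1 1 * t, t], ?_, ?_⟩
  · rw [det_fin_two_of, h11]
    linear_combination hst
  · rw [det_fin_two, eta_fin_two x, h11]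
    ext i j
    fin_cases i <;> fin_cases j <;> simp [mul_apply, Fin.sum_univ_two] <;> ring

theorem PadicInt.exists_det_eq_one_mul_eq_mul_of_trace_eq_zero {p : ℕ} [Fact p.Prime]
    (hp : p ≠ 2) {x : Matrix (Fin 2) (Fin 2) ℤ_[p]} (hx : x.trace = 0) (hdet : IsUnit x.det) :
    ∃ G : Matrix (Fin 2) (Fin 2) ℤ_[p], G.det = 1 ∧ x * G = G * !![0, 1; -x.det, 0] := by
  have h11 : x 1 1 = -x 0 0 := by rw [trace_fin_two] at hx; linear_combination hx
  have hform : IsUnit (x 0 0 ^ 2 + x 0 1 * x 1 0) := by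
    rw [det_fin_two, h11] at hdet
    simpa [← neg_add', sq] using hdet.neg
  obtain ⟨s, t, hst⟩ := exists_binary_form_eq_one hp hform
  exact Matrix.exists_det_eq_one_mul_eq_mul_of_trace_eq_zero hx hst

theorem Matrix.exists_det_eq_one_conj_eq {n R : Type*} [Fintype n] [DecidableEq n] [CommRing R]
    {x y c G H : Matrix n n R} (hG : G.det = 1) (hH : H.det = 1)
    (hxG : x * G = G * c) (hyH : y * H = H * c) :
    ∃ g : Matrix n n R, g.det = 1 ∧ y = g * x * g⁻¹ := by
  have hGu : IsUnit G.det := hG ▸ isUnit_one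
  have hHu : IsUnit H.det := hH ▸ isUnit_one
  refine ⟨H * G⁻¹, by rw [det_mul, det_nonsing_inv, hG, hH, Ring.inverse_one, one_mul], ?_⟩
  rw [mul_inv_rev, nonsing_inv_nonsing_inv _ hGu]
  calc y = H * c * H⁻¹ := by rw [← hyH, Matrix.mul_nonsing_inv_cancel_right (A := H) y hHu]
    _ = H * G⁻¹ * (x * G) * H⁻¹ := by
      rw [hxG]
      simp only [Matrix.mul_assoc, Matrix.nonsing_inv_mul_cancel_left _ _ hGu]
    _ = H * G⁻¹ * x * (G * H⁻¹) := by simp only [Matrix.mul_assoc]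

/-- For an odd prime `p` and `d ∈ ℤ_p` with `p ∤ d`, the conjugation action of
`SL₂(ℤ_p)` on trace-zero matrices of determinant `d` in `M₂(ℤ_p)` is transitive. -/
theorem sl2_transitive_trace_zero_det (p : ℕ) [Fact p.Prime] (hp : p ≠ 2)
    (d : ℤ_[p]) (hd : ¬ (p : ℤ_[p]) ∣ d)
    (x y : Matrix (Fin 2) (Fin 2) ℤ_[p])
    (hx : x.trace = 0) (hy : y.trace = 0) (hxd : x.det = d) (hyd : y.det = d) :
    ∃ g : Matrix (Fin 2) (Fin 2) ℤ_[p], g.det = 1 ∧ y = g * x * g⁻¹ := by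
  have hunit : IsUnit d := PadicInt.isUnit_iff_not_dvd.mpr hd
  obtain ⟨G, hG, hxG⟩ :=
    PadicInt.exists_det_eq_one_mul_eq_mul_of_trace_eq_zero hp hx (hxd ▸ hunit)
  obtain ⟨H, hH, hyH⟩ :=
    PadicInt.exists_det_eq_one_mul_eq_mul_of_trace_eq_zero hp hy (hyd ▸ hunit)
  rw [hxd] at hxG
  rw [hyd] at hyH
  exact Matrix.exists_det_eq_one_conj_eq hG hH hxG hyH
end

section
/- Let T be a self-adjoint operator on the finite-dimensional inner product space L²(V) for a finite set V (e.g., the normalized adjacency operator of a d-regular graph), let Π be the orthogonal projection onto constant functions with TΠ = Π, and let ‖T‖₀ denote the operator norm of T on the orthogonal complement of constants. For subsets Q₁, Q₂ ⊆ V with densities μ₁ = |Q₁|/|V|, μ₂ = |Q₂|/|V|, and A_i the multiplication operator by the indicator of Q_i, the operator norm of A₁ T A₂ is at most √(μ₁μ₂) + ‖T‖₀. -/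
/-!
Write `g = A₂ f` and split it as `g = m + h` with `m` its mean and `h ⟂ 1`. Since `T` fixes
constants, `A₁ T g = A₁ m + A₁ T h`. The constant part has norm `√|Q₁| · |m|`, and Cauchy–Schwarz
on `Q₂` gives `|m| ≤ √|Q₂| ‖f‖ / |V|`; the spectral-gap part has norm at most `t₀ ‖h‖ ≤ t₀ ‖f‖`.
-/

open Finset

theorem Real.sqrt_sum_add_sq_le {ι : Type*} (s : Finset ι) (a b : ι → ℝ) :
    √(∑ i ∈ s, (a i + b i) ^ 2) ≤ √(∑ i ∈ s, a i ^ 2) + √(∑ i ∈ s, b i ^ 2) := by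
  have norm_toLp (c : ι → ℝ) : ‖WithLp.toLp 2 (fun i : s => c i)‖ = √(∑ i ∈ s, c i ^ 2) := by
    simp [EuclideanSpace.norm_eq, sum_attach s (fun i => c i ^ 2)]
  rw [← norm_toLp, ← norm_toLp, ← norm_toLp]
  exact norm_add_le (WithLp.toLp 2 (fun i : s => a i)) (WithLp.toLp 2 (fun i : s => b i))

section Mean

variable {V : Type*} [Fintype V]

theorem sum_sub_mean_eq_zero (g : V → ℝ) :
    ∑ v, (g v - (∑ w, g w) / Fintype.card V) = 0 := by
  have empty_sum (hV : (Fintype.card V : ℝ) = 0) : ∑ w, g w = 0 := by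
    have : IsEmpty V := Fintype.card_eq_zero_iff.mp (mod_cast hV)
    simp
  rw [sum_sub_distrib, sum_const, card_univ, nsmul_eq_mul, ← mul_div_assoc,
    mul_div_cancel_left_of_imp empty_sum, sub_self]

theorem sum_sq_sub_mean_le (g : V → ℝ) :
    ∑ v, (g v - (∑ w, g w) / Fintype.card V) ^ 2 ≤ ∑ v, g v ^ 2 := by
  set m := (∑ w, g w) / Fintype.card V
  have split : ∑ v, g v ^ 2 = ∑ v, (g v - m) ^ 2 + 2 * m * ∑ v, (g v - m) + ∑ _v : V, m ^ 2 := by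
    rw [mul_sum, ← sum_add_distrib, ← sum_add_distrib]
    exact sum_congr rfl fun v _ => by ring
  rw [split, sum_sub_mean_eq_zero g]
  nlinarith [sum_nonneg fun (_ : V) (_ : _ ∈ univ) => sq_nonneg m]

theorem sqrt_sum_sq_sum_div_le (Q₁ Q₂ : Finset V) (f : V → ℝ) (n : ℝ) :
    √(∑ _v ∈ Q₁, ((∑ w ∈ Q₂, f w) / n) ^ 2) ≤
      √(#Q₁ / n * (#Q₂ / n)) * √(∑ v, f v ^ 2) := by
  have cauchy_schwarz : (∑ w ∈ Q₂, f w) ^ 2 ≤ #Q₂ * ∑ v, f v ^ 2 :=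
    (sq_sum_le_card_mul_sum_sq).trans <| mul_le_mul_of_nonneg_left
      (sum_le_univ_sum_of_nonneg fun _ => sq_nonneg _) (Nat.cast_nonneg _)
  rw [← Real.sqrt_mul' _ (sum_nonneg fun _ _ => sq_nonneg _)]
  refine Real.sqrt_le_sqrt ?_
  rw [sum_const, nsmul_eq_mul, div_pow]
  calc (#Q₁ : ℝ) * ((∑ w ∈ Q₂, f w) ^ 2 / n ^ 2) ≤ #Q₁ * ((#Q₂ * ∑ v, f v ^ 2) / n ^ 2) := by
        gcongr
    _ = _ := by ring

end Mean

theorem indicator_sandwich_norm_bound_general {V : Type*} [Fintype V]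
    [DecidableEq V]
    (T : (V → ℝ) →ₗ[ℝ] (V → ℝ))
    (hTproj : ∀ f : V → ℝ,
      T (fun _ => (∑ v, f v) / (Fintype.card V : ℝ)) =
        fun _ => (∑ v, f v) / (Fintype.card V : ℝ))
    (t₀ : ℝ) (ht₀ : 0 ≤ t₀)
    (hgap : ∀ f : V → ℝ, (∑ v, f v) = 0 →
      Real.sqrt (∑ v, T f v ^ 2) ≤ t₀ * Real.sqrt (∑ v, f v ^ 2))
    (Q₁ Q₂ : Finset V) (f : V → ℝ) :
    Real.sqrt (∑ v ∈ Q₁, T (fun w => if w ∈ Q₂ then f w else 0) v ^ 2) ≤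
      (Real.sqrt ((Q₁.card : ℝ) / (Fintype.card V : ℝ) *
          ((Q₂.card : ℝ) / (Fintype.card V : ℝ))) + t₀) *
        Real.sqrt (∑ v, f v ^ 2) := by
  set g : V → ℝ := fun w => if w ∈ Q₂ then f w else 0
  set m := (∑ w, g w) / Fintype.card V
  set h : V → ℝ := fun v => g v - m
  have m_eq : m = (∑ w ∈ Q₂, f w) / Fintype.card V := by simp [m, g, sum_ite_mem]
  have sum_sq_g : ∑ v, g v ^ 2 ≤ ∑ v, f v ^ 2 :=
    sum_le_sum fun v _ => by by_cases hv : v ∈ Q₂ <;> simp [g, hv, sq_nonneg]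
  have T_g (v : V) : T g v = m + T h v := by
    have : g = h + fun _ => m := by ext v; simp [h]
    rw [this, map_add, hTproj g, Pi.add_apply, add_comm]
  have gap_part : √(∑ v ∈ Q₁, T h v ^ 2) ≤ t₀ * √(∑ v, f v ^ 2) :=
    calc √(∑ v ∈ Q₁, T h v ^ 2) ≤ √(∑ v, T h v ^ 2) :=
          Real.sqrt_le_sqrt (sum_le_univ_sum_of_nonneg fun _ => sq_nonneg _)
      _ ≤ t₀ * √(∑ v, h v ^ 2) := hgap h (sum_sub_mean_eq_zero g)
      _ ≤ t₀ * √(∑ v, f v ^ 2) := mul_le_mul_of_nonneg_left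
          (Real.sqrt_le_sqrt ((sum_sq_sub_mean_le g).trans sum_sq_g)) ht₀
  calc √(∑ v ∈ Q₁, T g v ^ 2) = √(∑ v ∈ Q₁, (m + T h v) ^ 2) := by simp only [T_g]
    _ ≤ √(∑ _v ∈ Q₁, m ^ 2) + √(∑ v ∈ Q₁, T h v ^ 2) := Real.sqrt_sum_add_sq_le _ _ _
    _ ≤ √(#Q₁ / Fintype.card V * (#Q₂ / Fintype.card V)) * √(∑ v, f v ^ 2)
          + t₀ * √(∑ v, f v ^ 2) := by
        gcongr
        rw [m_eq]
        exact sqrt_sum_sq_sum_div_le Q₁ Q₂ f _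
    _ = _ := by ring

/-- Operator norm bound for `A₁ T A₂`: if `T` is self-adjoint on `L²(V)`, fixes the
projection onto constants (`TΠ = Π`), and has norm at most `t₀` on the orthogonal
complement of the constants, then for subsets `Q₁, Q₂ ⊆ V` with densities `μᵢ = |Qᵢ|/|V|`
the operator `A₁ T A₂` (multiplication by indicators pre- and post-composed with `T`) has
operator norm at most `√(μ₁ μ₂) + t₀`. -/
theorem indicator_sandwich_norm_bound {V : Type*} [Fintype V] [Nonempty V]
    [DecidableEq V]
    (T : (V → ℝ) →ₗ[ℝ] (V → ℝ))
    (hsa : ∀ f g : V → ℝ, (∑ v, T f v * g v) = ∑ v, f v * T g v)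
    (hTproj : ∀ f : V → ℝ,
      T (fun _ => (∑ v, f v) / (Fintype.card V : ℝ)) =
        fun _ => (∑ v, f v) / (Fintype.card V : ℝ))
    (t₀ : ℝ) (ht₀ : 0 ≤ t₀)
    (hgap : ∀ f : V → ℝ, (∑ v, f v) = 0 →
      Real.sqrt (∑ v, T f v ^ 2) ≤ t₀ * Real.sqrt (∑ v, f v ^ 2))
    (Q₁ Q₂ : Finset V) (f : V → ℝ) :
    Real.sqrt (∑ v ∈ Q₁, T (fun w => if w ∈ Q₂ then f w else 0) v ^ 2) ≤
      (Real.sqrt ((Q₁.card : ℝ) / (Fintype.card V : ℝ) *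
          ((Q₂.card : ℝ) / (Fintype.card V : ℝ))) + t₀) *
        Real.sqrt (∑ v, f v ^ 2) :=
  indicator_sandwich_norm_bound_general T hTproj t₀ ht₀ hgap Q₁ Q₂ f
end

section
/- Let G be a finite d-regular graph (d > 2) with normalized adjacency operator T, and let Q₁, ..., Q_ℓ ⊆ V with densities μ_i = |Q_i|/|V|. The probability that a uniform random walk on G (uniform random starting vertex, uniform random steps) is in Q_j at step j for all 1 ≤ j ≤ ℓ is at most ∏_{i=1}^{ℓ-1} (√(μ_i μ_{i+1}) + ‖T‖), where ‖T‖ is the norm of T restricted to the orthogonal complement of constants. -/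
/-!
Let `φₙ(x) = d⁻ⁿ · #{walks (v₀, …, vₙ = x) with vⱼ ∈ Qⱼ for 1 ≤ j ≤ n}`, so that `φ₀ = 1`,
`φₙ₊₁ = 1_{Qₙ₊₁} · T φₙ`, and the probability in question is `(∑ φ_ℓ) / |V|`.
If `f` is supported on `A`, split `f = c + f₀` with `c` its mean and `f₀ ⊥ 1`. Then
`1_B · T f = c · 1_B + 1_B · T f₀`; Cauchy–Schwarz on `A` bounds `‖c · 1_B‖` by
`√(μ_A μ_B) ‖f‖`, and the spectral gap bounds `‖T f₀‖` by `t₀ ‖f₀‖ ≤ t₀ ‖f‖`.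
Iterating from `‖φ₁‖ ≤ √|V|` and using `∑ φ_ℓ ≤ √|V| ‖φ_ℓ‖` gives the product bound.
-/

open Finset

section L2

variable {V : Type*} [Fintype V]

noncomputable def l2norm (f : V → ℝ) : ℝ := √(∑ v, f v ^ 2)

lemma l2norm_eq_norm (f : V → ℝ) :
    l2norm f = ‖(WithLp.toLp 2 f : EuclideanSpace ℝ V)‖ := by
  simp [l2norm, EuclideanSpace.norm_eq]

lemma l2norm_add_le (f g : V → ℝ) : l2norm (f + g) ≤ l2norm f + l2norm g := by
  simpa only [l2norm_eq_norm, WithLp.toLp_add] using norm_add_le _ _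

lemma l2norm_le_of_abs_le {f g : V → ℝ} (h : ∀ v, |f v| ≤ |g v|) : l2norm f ≤ l2norm g :=
  Real.sqrt_le_sqrt <| sum_le_sum fun v _ => sq_le_sq.2 (h v)

lemma abs_sum_le_sqrt_card_mul_l2norm (A : Finset V) (f : V → ℝ) :
    |∑ v ∈ A, f v| ≤ √(#A : ℝ) * l2norm f := by
  calc |∑ v ∈ A, f v| ≤ ∑ v ∈ A, 1 * |f v| := by
        simpa only [one_mul] using abs_sum_le_sum_abs f A
    _ ≤ √(∑ v ∈ A, 1 ^ 2) * √(∑ v ∈ A, |f v| ^ 2) := Real.sum_mul_le_sqrt_mul_sqrt _ _ _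
    _ ≤ √(#A : ℝ) * l2norm f := by
      simp only [one_pow, sum_const, nsmul_eq_mul, mul_one, sq_abs, l2norm]
      gcongr
      exact subset_univ A

lemma l2norm_ite_const [DecidableEq V] (B : Finset V) (c : ℝ) :
    l2norm (fun v => if v ∈ B then c else 0) = |c| * √(#B : ℝ) := by
  simp only [l2norm, apply_ite (· ^ 2), zero_pow two_ne_zero, sum_ite_mem, univ_inter, sum_const,
    nsmul_eq_mul]
  rw [mul_comm, Real.sqrt_mul (sq_nonneg c), Real.sqrt_sq_eq_abs]

lemma l2norm_sub_mean_le [Nonempty V] (f : V → ℝ) :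
    l2norm (fun v => f v - (∑ w, f w) / Fintype.card V) ≤ l2norm f := by
  set c := (∑ w, f w) / Fintype.card V
  have hsum : ∑ w, f w = Fintype.card V * c := by
    rw [mul_div_cancel₀ _ (Nat.cast_ne_zero.2 Fintype.card_ne_zero)]
  have hexpand : ∑ v, (f v - c) ^ 2 = ∑ v, f v ^ 2 - Fintype.card V * c ^ 2 := by
    simp only [sub_sq, sum_add_distrib, sum_sub_distrib, ← sum_mul, ← mul_sum, hsum, sum_const,
      card_univ, nsmul_eq_mul]
    ring
  refine Real.sqrt_le_sqrt ?_
  rw [hexpand]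
  nlinarith [sq_nonneg c, (Nat.cast_nonneg (Fintype.card V) : (0 : ℝ) ≤ _)]

end L2

namespace SimpleGraph

variable {V : Type*} (G : SimpleGraph V) (Q : ℕ → Finset V)

-- An `abbrev`, so that filtering by it uses the same decidability instance as the unfolded
-- predicate.
abbrev IsWalkThrough {n : ℕ} (w : Fin (n + 1) → V) : Prop :=
  (∀ i : Fin n, G.Adj (w i.castSucc) (w i.succ)) ∧ ∀ j : Fin n, w j.succ ∈ Q (j.1 + 1)

lemma isWalkThrough_snoc_iff {n : ℕ} (w : Fin (n + 1) → V) (x : V) :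
    G.IsWalkThrough Q (Fin.snoc w x : Fin (n + 2) → V) ↔
      G.IsWalkThrough Q w ∧ G.Adj (w (Fin.last n)) x ∧ x ∈ Q (n + 1) := by
  simp only [IsWalkThrough, Fin.forall_fin_succ' (n := n), Fin.succ_castSucc, Fin.snoc_castSucc,
    Fin.succ_last, Fin.snoc_last, Fin.val_castSucc, Fin.val_last]
  tauto

variable [Fintype V] [DecidableRel G.Adj] {d : ℕ}

noncomputable def normAdj (d : ℕ) (f : V → ℝ) (v : V) : ℝ := (∑ w ∈ G.neighborFinset v, f w) / d

lemma normAdj_add (f g : V → ℝ) : G.normAdj d (f + g) = G.normAdj d f + G.normAdj d g := by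
  ext v
  simp only [normAdj, Pi.add_apply, sum_add_distrib, add_div]

variable {G}

lemma IsRegularOfDegree.normAdj_const (hreg : G.IsRegularOfDegree d) (hd : d ≠ 0) (c : ℝ) :
    G.normAdj d (fun _ => c) = fun _ => c := by
  ext v
  rw [normAdj, sum_const, card_neighborFinset_eq_degree, hreg v, nsmul_eq_mul,
    mul_div_cancel_left₀ _ (Nat.cast_ne_zero.2 hd)]

variable [DecidableEq V]

theorem l2norm_ite_normAdj_le [Nonempty V] (hreg : G.IsRegularOfDegree d)
    (hd : d ≠ 0) {t₀ : ℝ} (ht₀ : 0 ≤ t₀)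
    (hgap : ∀ f : V → ℝ, ∑ v, f v = 0 → l2norm (G.normAdj d f) ≤ t₀ * l2norm f)
    (A B : Finset V) {f : V → ℝ} (hf : ∀ v ∉ A, f v = 0) :
    l2norm (fun v => if v ∈ B then G.normAdj d f v else 0) ≤
      (√(#A / Fintype.card V * (#B / Fintype.card V)) + t₀) * l2norm f := by
  set N : ℝ := (Fintype.card V : ℝ)
  have hN : 0 < N := Nat.cast_pos.2 Fintype.card_pos
  set c := (∑ v, f v) / N
  set f₀ : V → ℝ := fun v => f v - c
  have hsplit : (fun v => if v ∈ B then G.normAdj d f v else 0) =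
      (fun v => if v ∈ B then c else 0) + fun v => if v ∈ B then G.normAdj d f₀ v else 0 := by
    have hf₀ : f = f₀ + fun _ => c := by ext v; simp [f₀]
    ext v
    rw [hf₀, normAdj_add, hreg.normAdj_const hd]
    by_cases hv : v ∈ B <;> simp [hv, add_comm]
  have hconst : l2norm (fun v => if v ∈ B then c else 0) ≤
      √(#A / N * (#B / N)) * l2norm f := by
    have hc : |c| ≤ √(#A : ℝ) * l2norm f / N := by
      rw [abs_div, abs_of_pos hN, ← sum_subset (subset_univ A) fun v _ hv => hf v hv]
      gcongr
      exact abs_sum_le_sqrt_card_mul_l2norm A f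
    calc l2norm (fun v => if v ∈ B then c else 0) = |c| * √(#B : ℝ) := l2norm_ite_const B c
      _ ≤ √(#A : ℝ) * l2norm f / N * √(#B : ℝ) := by gcongr
      _ = √(#A / N * (#B / N)) * l2norm f := by
        rw [div_mul_div_comm, Real.sqrt_div' _ (mul_self_nonneg N), Real.sqrt_mul_self hN.le,
          Real.sqrt_mul (Nat.cast_nonneg _)]
        ring
  have hmeanzero : l2norm (fun v => if v ∈ B then G.normAdj d f₀ v else 0) ≤ t₀ * l2norm f := by
    have hsum : ∑ v, f₀ v = 0 := by
      rw [sum_sub_distrib, sum_const, card_univ, nsmul_eq_mul, mul_div_cancel₀ _ hN.ne', sub_self]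
    calc l2norm (fun v => if v ∈ B then G.normAdj d f₀ v else 0)
        ≤ l2norm (G.normAdj d f₀) :=
          l2norm_le_of_abs_le fun v => by split_ifs <;> simp
      _ ≤ t₀ * l2norm f₀ := hgap f₀ hsum
      _ ≤ t₀ * l2norm f := by gcongr; exact l2norm_sub_mean_le f
  calc _ ≤ _ := hsplit ▸ l2norm_add_le _ _
    _ ≤ _ := add_le_add hconst hmeanzero
    _ = _ := by ring

variable (G)

def walkCount (n : ℕ) (x : V) : ℕ :=
  #{w : Fin (n + 1) → V | G.IsWalkThrough Q w ∧ w (Fin.last n) = x}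

lemma walkCount_zero (x : V) : G.walkCount Q 0 x = 1 := by
  rw [walkCount, card_eq_one]
  refine ⟨fun _ => x, ?_⟩
  ext w
  simp [IsWalkThrough, funext_iff, Fin.forall_fin_one]

lemma walkCount_succ (n : ℕ) (x : V) :
    G.walkCount Q (n + 1) x =
      if x ∈ Q (n + 1) then ∑ y ∈ G.neighborFinset x, G.walkCount Q n y else 0 := by
  split_ifs with hx
  · set S := ({w : Fin (n + 1) → V | G.IsWalkThrough Q w ∧ G.Adj (w (Fin.last n)) x} : Finset _)
    calc G.walkCount Q (n + 1) x = #S := by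
          refine card_nbij' Fin.init (Fin.snoc · x) ?_ ?_ ?_ ?_
          · intro w hw
            simp only [coe_filter, mem_univ, true_and, Set.mem_ofPred_eq, S] at hw ⊢
            obtain ⟨hw, rfl⟩ := hw
            rw [← Fin.snoc_init_self w, isWalkThrough_snoc_iff] at hw
            exact ⟨hw.1, hw.2.1⟩
          · intro w hw
            simp only [coe_filter, mem_univ, true_and, Set.mem_ofPred_eq, S] at hw ⊢
            exact ⟨(isWalkThrough_snoc_iff G Q w x).2 ⟨hw.1, hw.2, hx⟩, Fin.snoc_last _ _⟩
          · intro w hw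
            simp only [coe_filter, mem_univ, true_and, Set.mem_ofPred_eq] at hw
            rw [← hw.2]
            exact Fin.snoc_init_self w
          · exact fun w _ => Fin.init_snoc _ _
      _ = ∑ y ∈ G.neighborFinset x, #{w ∈ S | w (Fin.last n) = y} := by
          refine card_eq_sum_card_fiberwise (f := fun w : Fin (n + 1) → V => w (Fin.last n))
            fun w hw => ?_
          simpa [S, adj_comm] using (mem_filter.1 hw).2.2
      _ = ∑ y ∈ G.neighborFinset x, G.walkCount Q n y := by
          refine sum_congr rfl fun y hy => ?_
          rw [walkCount, filter_filter]
          refine congr_arg card (filter_congr fun w _ => ?_)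
          rw [mem_neighborFinset] at hy
          constructor
          · exact fun ⟨⟨hw, _⟩, hlast⟩ => ⟨hw, hlast⟩
          · exact fun ⟨hw, hlast⟩ => ⟨⟨hw, hlast ▸ hy.symm⟩, hlast⟩
  · refine card_eq_zero.2 (filter_eq_empty_iff.2 fun w _ ⟨hw, hlast⟩ => hx ?_)
    rw [← Fin.snoc_init_self w, isWalkThrough_snoc_iff] at hw
    exact hlast ▸ hw.2.2

lemma card_isWalkThrough (n : ℕ) :
    #{w : Fin (n + 1) → V | G.IsWalkThrough Q w} = ∑ x, G.walkCount Q n x := by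
  rw [card_eq_sum_card_fiberwise (f := fun w : Fin (n + 1) → V => w (Fin.last n)) (t := univ)
    fun _ _ => mem_coe.2 (mem_univ _)]
  simp only [walkCount, filter_filter]

noncomputable def walkWeight (d n : ℕ) (x : V) : ℝ := G.walkCount Q n x / (d : ℝ) ^ n

variable {G Q}

lemma walkWeight_zero (d : ℕ) : G.walkWeight Q d 0 = fun _ => 1 := by
  ext x
  simp [walkWeight, walkCount_zero]

lemma walkWeight_succ (d n : ℕ) :
    G.walkWeight Q d (n + 1) =
      fun x => if x ∈ Q (n + 1) then G.normAdj d (G.walkWeight Q d n) x else 0 := by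
  ext x
  rw [walkWeight, walkCount_succ]
  split_ifs
  · push_cast
    simp only [normAdj, walkWeight, ← sum_div, div_div, pow_succ]
  · simp

theorem l2norm_walkWeight_le [Nonempty V] (hreg : G.IsRegularOfDegree d) (hd : d ≠ 0)
    {t₀ : ℝ} (ht₀ : 0 ≤ t₀)
    (hgap : ∀ f : V → ℝ, ∑ v, f v = 0 → l2norm (G.normAdj d f) ≤ t₀ * l2norm f) (n : ℕ) :
    l2norm (G.walkWeight Q d (n + 1)) ≤
      (∏ i ∈ Ico 1 (n + 1),
        (√(#(Q i) / Fintype.card V * (#(Q (i + 1)) / Fintype.card V)) + t₀)) *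
          √(Fintype.card V : ℝ) := by
  induction n with
  | zero =>
    rw [walkWeight_succ, walkWeight_zero, hreg.normAdj_const hd, l2norm_ite_const]
    simpa using card_le_univ (Q 1)
  | succ n ih =>
    have hsupp : ∀ v ∉ Q (n + 1), G.walkWeight Q d (n + 1) v = 0 := fun v hv => by
      simp [walkWeight_succ, hv]
    rw [walkWeight_succ, prod_Ico_succ_top (by omega), mul_comm _ (√_ + t₀), mul_assoc]
    exact (l2norm_ite_normAdj_le hreg hd ht₀ hgap _ _ hsupp).trans
      (mul_le_mul_of_nonneg_left ih (add_nonneg (Real.sqrt_nonneg _) ht₀))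

theorem sum_walkWeight_le [Nonempty V] (hreg : G.IsRegularOfDegree d) (hd : d ≠ 0)
    {t₀ : ℝ} (ht₀ : 0 ≤ t₀)
    (hgap : ∀ f : V → ℝ, ∑ v, f v = 0 → l2norm (G.normAdj d f) ≤ t₀ * l2norm f) (ℓ : ℕ) :
    ∑ x, G.walkWeight Q d ℓ x ≤
      Fintype.card V *
        ∏ i ∈ Ico 1 ℓ, (√(#(Q i) / Fintype.card V * (#(Q (i + 1)) / Fintype.card V)) + t₀) := by
  cases ℓ with
  | zero => simp [walkWeight_zero]
  | succ n =>
    calc ∑ x, G.walkWeight Q d (n + 1) x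
        ≤ √(Fintype.card V : ℝ) * l2norm (G.walkWeight Q d (n + 1)) := by
          simpa using (le_abs_self _).trans (abs_sum_le_sqrt_card_mul_l2norm univ _)
      _ ≤ √(Fintype.card V : ℝ) * ((∏ i ∈ Ico 1 (n + 1),
            (√(#(Q i) / Fintype.card V * (#(Q (i + 1)) / Fintype.card V)) + t₀)) *
              √(Fintype.card V : ℝ)) := by
          gcongr
          exact l2norm_walkWeight_le hreg hd ht₀ hgap n
      _ = _ := by
          rw [mul_comm, mul_assoc, Real.mul_self_sqrt (Nat.cast_nonneg _), mul_comm]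

lemma card_isWalkThrough_eq_pow_mul_sum_walkWeight (hd : d ≠ 0) (n : ℕ) :
    (#{w : Fin (n + 1) → V | G.IsWalkThrough Q w} : ℝ) =
      (d : ℝ) ^ n * ∑ x, G.walkWeight Q d n x := by
  rw [card_isWalkThrough, mul_sum]
  push_cast
  refine sum_congr rfl fun x _ => ?_
  rw [walkWeight, mul_div_cancel₀ _ (pow_ne_zero _ (Nat.cast_ne_zero.2 hd))]

end SimpleGraph

/-- Kahn–Linial–Nisan type bound: for a finite `d`-regular graph `G` (`d > 2`) whose
normalized adjacency operator has norm at most `t₀` on the complement of the constants,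
and subsets `Q₁, …, Q_ℓ` of densities `μᵢ`, the probability that a uniform random walk is
in `Q_j` at step `j` for all `1 ≤ j ≤ ℓ` is at most `∏_{i=1}^{ℓ-1} (√(μᵢ μᵢ₊₁) + t₀)`. -/
theorem random_walk_subsets_bound {V : Type*} [Fintype V] [DecidableEq V] [Nonempty V]
    (G : SimpleGraph V) [DecidableRel G.Adj] (d : ℕ) (hd : 2 < d)
    (hreg : G.IsRegularOfDegree d)
    (t₀ : ℝ) (ht₀ : 0 ≤ t₀)
    (hgap : ∀ f : V → ℝ, (∑ v, f v) = 0 →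
      Real.sqrt (∑ v, ((∑ w ∈ G.neighborFinset v, f w) / (d : ℝ)) ^ 2) ≤
        t₀ * Real.sqrt (∑ v, f v ^ 2))
    (ℓ : ℕ) (Q : ℕ → Finset V) :
    ((univ.filter fun w : Fin (ℓ + 1) → V =>
        (∀ i : Fin ℓ, G.Adj (w i.castSucc) (w i.succ)) ∧
        (∀ j : Fin ℓ, w j.succ ∈ Q (j.1 + 1))).card : ℝ) /
        ((Fintype.card V : ℝ) * (d : ℝ) ^ ℓ) ≤
      ∏ i ∈ Finset.Ico 1 ℓ,
        (Real.sqrt (((Q i).card : ℝ) / (Fintype.card V : ℝ) *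
            (((Q (i + 1)).card : ℝ) / (Fintype.card V : ℝ))) + t₀) := by
  have hd0 : d ≠ 0 := by omega
  have hN : (0 : ℝ) < Fintype.card V := Nat.cast_pos.2 Fintype.card_pos
  rw [SimpleGraph.card_isWalkThrough_eq_pow_mul_sum_walkWeight (G := G) (Q := Q) hd0 ℓ,
    mul_comm (Fintype.card V : ℝ), ← div_div, mul_div_cancel_left₀ _ (pow_ne_zero _ (Nat.cast_ne_zero.2 hd0)), div_le_iff₀' hN]
  exact SimpleGraph.sum_walkWeight_le hreg hd0 ht₀ hgap ℓ
end

section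
/- Let G be a finite undirected d-regular (multi)graph, and let G' be its arc graph: vertices are directed edges (arcs) a of G, with a directed edge from arc a to arc b iff the head of a equals the tail of b and b is not the reversal of a. Let T' be the normalized adjacency operator of G' (degree d-1). On the orthogonal complement of the images of the maps B, E : L²(G) → L²(G') defined by Bf(a) = f(a⁻), Ef(a) = f(a⁺), the operator T' acts by F ↦ -(1/(d-1))·F̄, where F̄(a) = F(ā) and ā denotes reversal. In particular every eigenvalue of T' on this complement has absolute value at most 1/(d-1). -/
open Finset

/-!
The arcs leaving `tgt a` are the non-backtracking successors of `a` together with `rev a`, so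
orthogonality to the image of `B` turns the non-backtracking sum at `a` into `-F (rev a)`. Hence
`T'` acts on the new space as `-(1/(d-1))` times reversal, an involution, and an eigenvalue `λ`
satisfies `λ² = (d-1)⁻²`.
-/

lemma sum_filter_src_eq_tgt_ne_rev {V A M : Type*} [Fintype A] [DecidableEq V] [DecidableEq A]
    [AddCommGroup M] {src tgt : A → V} {rev : A → A} (hsrcrev : ∀ a, src (rev a) = tgt a)
    {F : A → M} (hB : ∀ v : V, (∑ a ∈ univ.filter fun a => src a = v, F a) = 0) (a : A) :
    (∑ b ∈ univ.filter fun b => src b = tgt a ∧ b ≠ rev a, F b) = -F (rev a) := by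
  have hmem : rev a ∈ univ.filter fun b => src b = tgt a := by simp [hsrcrev a]
  have herase : (univ.filter fun b => src b = tgt a ∧ b ≠ rev a) =
      (univ.filter fun b => src b = tgt a).erase (rev a) := by
    ext b; simp [and_comm]
  rw [herase, sum_erase_eq_sub hmem, hB, zero_sub]

lemma abs_eq_abs_of_mul_eq_mul_comp_involutive {A K : Type*} [Field K] [LinearOrder K]
    [IsStrictOrderedRing K] {rev : A → A} (hrev : Function.Involutive rev) {F : A → K}
    (hF : F ≠ 0) {lam c : K} (h : ∀ a, lam * F a = c * F (rev a)) : |lam| = |c| := by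
  obtain ⟨a, ha⟩ := Function.ne_iff.1 hF
  have hsq : lam ^ 2 * F a = c ^ 2 * F a := by
    calc lam ^ 2 * F a = c * (lam * F (rev a)) := by rw [sq, mul_assoc, h]; ring
      _ = c ^ 2 * F a := by rw [h, hrev]; ring
  exact sq_eq_sq_iff_abs_eq_abs _ _ |>.1 (mul_right_cancel₀ ha hsq)

theorem arc_graph_new_space_general {V A : Type*} [Fintype A] [DecidableEq V]
    [DecidableEq A]
    (src tgt : A → V) (rev : A → A)
    (hrev : ∀ a, rev (rev a) = a)
    (hsrcrev : ∀ a, src (rev a) = tgt a)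
    (d : ℕ) (hd : 2 < d)
    (F : A → ℝ)
    (hB : ∀ v : V, (∑ a ∈ univ.filter fun a => src a = v, F a) = 0) :
    (∀ a : A,
      (∑ b ∈ univ.filter fun b => src b = tgt a ∧ b ≠ rev a, F b) / ((d : ℝ) - 1) =
        -(1 / ((d : ℝ) - 1)) * F (rev a)) ∧
    (∀ lam : ℝ, F ≠ 0 →
      (∀ a : A,
        (∑ b ∈ univ.filter fun b => src b = tgt a ∧ b ≠ rev a, F b) / ((d : ℝ) - 1) =
          lam * F a) →
      |lam| ≤ 1 / ((d : ℝ) - 1)) := by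
  have hT (a : A) := sum_filter_src_eq_tgt_ne_rev hsrcrev hB a
  refine ⟨fun a => by rw [hT]; ring, fun lam hF heig => ?_⟩
  have hc : 0 < 1 / ((d : ℝ) - 1) := by
    have : (2 : ℝ) < d := by exact_mod_cast hd
    exact one_div_pos.2 (by linarith)
  have habs := abs_eq_abs_of_mul_eq_mul_comp_involutive hrev hF (c := -(1 / ((d : ℝ) - 1)))
    fun a => by rw [← heig, hT]; ring
  rw [habs, abs_neg, abs_of_pos hc]

/-- Action of the arc-graph operator `T'` on the "new space": for a `d`-regular symmetric
(multi)graph with arc set `A` (with source `src`, target `tgt`, and edge-reversal `rev`),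
if `F` is orthogonal to the images of both `B` and `E` (i.e. `∑_{src a = v} F a = 0` and
`∑_{tgt a = v} F a = 0` for all `v`), then `T' F = -(1/(d-1))·F̄` where `F̄(a) = F(ā)`;
in particular any eigenvalue of `T'` on this space has absolute value at most
`1/(d-1)`. -/
theorem arc_graph_new_space {V A : Type*} [Fintype V] [Fintype A] [DecidableEq V]
    [DecidableEq A]
    (src tgt : A → V) (rev : A → A)
    (hrev : ∀ a, rev (rev a) = a)
    (hsrcrev : ∀ a, src (rev a) = tgt a)
    (htgtrev : ∀ a, tgt (rev a) = src a)
    (d : ℕ) (hd : 2 < d)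
    (hreg : ∀ v : V, (univ.filter fun a => src a = v).card = d)
    (F : A → ℝ)
    (hB : ∀ v : V, (∑ a ∈ univ.filter fun a => src a = v, F a) = 0)
    (hE : ∀ v : V, (∑ a ∈ univ.filter fun a => tgt a = v, F a) = 0) :
    (∀ a : A,
      (∑ b ∈ univ.filter fun b => src b = tgt a ∧ b ≠ rev a, F b) / ((d : ℝ) - 1) =
        -(1 / ((d : ℝ) - 1)) * F (rev a)) ∧
    (∀ lam : ℝ, F ≠ 0 →
      (∀ a : A,
        (∑ b ∈ univ.filter fun b => src b = tgt a ∧ b ≠ rev a, F b) / ((d : ℝ) - 1) =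
          lam * F a) →
      |lam| ≤ 1 / ((d : ℝ) - 1)) :=
  arc_graph_new_space_general src tgt rev hrev hsrcrev d hd F hB
end

section
/- With B, E, T, T' as in the arc-graph setup for a d-regular symmetric graph G, one has the identities ⟨Bf₁, Ef₂⟩ = d·⟨Tf₁, f₂⟩ and T' ∘ B = E. Consequently, if w is an eigenfunction of T with eigenvalue λ, then the span of Bw and Ew is T'-invariant, and every eigenvalue of T' on this span is an eigenvalue of the 2×2 matrix [[0, 1], [-1/(d-1), dλ/(d-1)]]. -/
/-!
On the span of `Bw` and `Ew` the arc-graph operator acts through the coefficients: since `T'B = E`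
and, erasing the backtracking arc, `(d - 1) T'E = dλ E - B`, one gets
`T'(c₀ Bw + c₁ Ew) = c'₀ Bw + c'₁ Ew` with `c' = c M` for the matrix `M` of the statement.
`Bw` and `Ew` may be linearly dependent, so an eigenvector of `T'` in the span need not have
coefficients forming a left eigenvector of `M`; still, `μ` is an eigenvalue of `c ↦ c M`, and
left and right eigenvalues of a matrix agree.
-/

open Finset Matrix

/-- The kernel of `L` is `N`-invariant; if `N - μ` were injective it would map that kernel onto
itself, and `(N - μ) c ∈ ker L` would force `c ∈ ker L`. -/
theorem Module.End.hasEigenvalue_of_comp_eq {K V W : Type*} [Field K] [AddCommGroup V]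
    [Module K V] [FiniteDimensional K V] [AddCommGroup W] [Module K W]
    {N : Module.End K V} {S : Module.End K W} {L : V →ₗ[K] W} (hSL : S ∘ₗ L = L ∘ₗ N)
    {μ : K} {c : V} (hc : L c ≠ 0) (hμ : S (L c) = μ • L c) : N.HasEigenvalue μ := by
  by_contra hN
  have hker : LinearMap.ker (N - μ • 1) = ⊥ := by
    rwa [hasEigenvalue_iff, not_not, eigenspace_def] at hN
  have hPL : ∀ x, L ((N - μ • 1) x) = S (L x) - μ • L x := fun x => by
    simp [← LinearMap.comp_apply L N, ← hSL]
  have hmaps : ∀ k ∈ LinearMap.ker L, (N - μ • 1) k ∈ LinearMap.ker L := fun k hk => by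
    simp_all [LinearMap.mem_ker]
  have hsurj := LinearMap.injective_iff_surjective.mp
    ((LinearMap.injective_restrict_iff hmaps).mpr (by simp [hker]))
  obtain ⟨⟨k, hk⟩, hkc⟩ := hsurj ⟨(N - μ • 1) c, by rw [LinearMap.mem_ker, hPL, hμ, sub_self]⟩
  have hkc' : k = c := LinearMap.ker_eq_bot.mp hker (congrArg Subtype.val hkc)
  exact hc (hkc' ▸ hk)

theorem Matrix.exists_mulVec_eq_smul_of_vecMul_eq_smul {n K : Type*} [Fintype n] [DecidableEq n]
    [Field K] {M : Matrix n n K} {μ : K} {c : n → K} (hc : c ≠ 0) (h : c ᵥ* M = μ • c) :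
    ∃ u ≠ 0, M *ᵥ u = μ • u := by
  have hdet : (M - μ • 1).det = 0 :=
    exists_vecMul_eq_zero_iff.mp ⟨c, hc, by simp [vecMul_sub, h, vecMul_smul]⟩
  obtain ⟨u, hu, hMu⟩ := exists_mulVec_eq_zero_iff.mpr hdet
  exact ⟨u, hu, by simpa [sub_mulVec, sub_eq_zero, smul_mulVec] using hMu⟩

theorem linearCombination_comp_src_tgt_apply {V A : Type*} (src tgt : A → V) (w : V → ℝ)
    (c : Fin 2 → ℝ) :
    Fintype.linearCombination ℝ ![fun a => w (src a), fun a => w (tgt a)] c =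
      fun a => c 0 * w (src a) + c 1 * w (tgt a) := by
  ext a
  simp [Fintype.linearCombination_apply, Fin.sum_univ_two]

section ArcGraph

variable {V A : Type*} [Fintype A] [DecidableEq V] (src tgt : A → V) (rev : A → A)

theorem sum_nonBacktracking_eq_sub [DecidableEq A] {M : Type*} [AddCommGroup M]
    (hsrcrev : ∀ a, src (rev a) = tgt a) (g : A → M) (a : A) :
    ∑ b ∈ univ.filter (fun b => src b = tgt a ∧ b ≠ rev a), g b =
      ∑ b ∈ univ.filter (fun b => src b = tgt a), g b - g (rev a) := by
  have hfilter : univ.filter (fun b => src b = tgt a ∧ b ≠ rev a) =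
      (univ.filter fun b => src b = tgt a).erase (rev a) := by
    ext b; simp [and_comm]
  rw [hfilter, sum_erase_eq_sub (by simp [hsrcrev])]

theorem sum_out_comp_src {M : Type*} [AddCommMonoid M] {d : ℕ}
    (hreg : ∀ v, (univ.filter fun a => src a = v).card = d) (f : V → M) (v : V) :
    ∑ a ∈ univ.filter (fun a => src a = v), f (src a) = d • f v := by
  rw [sum_congr rfl fun a ha => by rw [(mem_filter.mp ha).2], sum_const, hreg]

theorem sum_nonBacktracking_comp_src [DecidableEq A] (hsrcrev : ∀ a, src (rev a) = tgt a) {d : ℕ}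
    (hreg : ∀ v, (univ.filter fun a => src a = v).card = d) (f : V → ℝ) (a : A) :
    ∑ b ∈ univ.filter (fun b => src b = tgt a ∧ b ≠ rev a), f (src b) =
      ((d : ℝ) - 1) * f (tgt a) := by
  rw [sum_nonBacktracking_eq_sub src tgt rev hsrcrev, sum_out_comp_src src hreg, hsrcrev,
    nsmul_eq_mul, sub_one_mul]

theorem sum_nonBacktracking_comp_tgt [DecidableEq A] (hsrcrev : ∀ a, src (rev a) = tgt a)
    (htgtrev : ∀ a, tgt (rev a) = src a) {w : V → ℝ} {κ : ℝ}
    (hw : ∀ v, ∑ a ∈ univ.filter (fun a => src a = v), w (tgt a) = κ * w v) (a : A) :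
    ∑ b ∈ univ.filter (fun b => src b = tgt a ∧ b ≠ rev a), w (tgt b) =
      κ * w (tgt a) - w (src a) := by
  rw [sum_nonBacktracking_eq_sub src tgt rev hsrcrev, hw, htgtrev]

theorem sum_src_mul_tgt [Fintype V] {R : Type*} [CommSemiring R] (hrev : ∀ a, rev (rev a) = a)
    (hsrcrev : ∀ a, src (rev a) = tgt a) (htgtrev : ∀ a, tgt (rev a) = src a) (f₁ f₂ : V → R) :
    ∑ a, f₁ (src a) * f₂ (tgt a) =
      ∑ v, (∑ a ∈ univ.filter (fun a => src a = v), f₁ (tgt a)) * f₂ v := by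
  have hrev_bij : Function.Bijective rev := Function.Involutive.bijective hrev
  calc ∑ a, f₁ (src a) * f₂ (tgt a) = ∑ a, f₁ (tgt a) * f₂ (src a) := by
        rw [← hrev_bij.sum_comp]; simp only [hsrcrev, htgtrev]
    _ = ∑ v, ∑ a ∈ univ.filter (fun a => src a = v), f₁ (tgt a) * f₂ (src a) :=
        (sum_fiberwise univ src _).symm
    _ = _ := sum_congr rfl fun v _ => by
        rw [sum_mul]; exact sum_congr rfl fun a ha => by rw [(mem_filter.mp ha).2]

noncomputable def nonBacktrackingOp [DecidableEq A] (d : ℕ) : Module.End ℝ (A → ℝ) where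
  toFun F a := (∑ b ∈ univ.filter (fun b => src b = tgt a ∧ b ≠ rev a), F b) / ((d : ℝ) - 1)
  map_add' F G := by ext a; simp [sum_add_distrib, add_div]
  map_smul' r F := by ext a; simp [← mul_sum, mul_div_assoc]

theorem nonBacktrackingOp_apply [DecidableEq A] (d : ℕ) (F : A → ℝ) (a : A) :
    nonBacktrackingOp src tgt rev d F a =
      (∑ b ∈ univ.filter (fun b => src b = tgt a ∧ b ≠ rev a), F b) / ((d : ℝ) - 1) :=
  rfl

theorem nonBacktrackingOp_span_src_tgt [DecidableEq A] (hsrcrev : ∀ a, src (rev a) = tgt a)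
    (htgtrev : ∀ a, tgt (rev a) = src a) {d : ℕ} (hd : (d : ℝ) - 1 ≠ 0)
    (hreg : ∀ v, (univ.filter fun a => src a = v).card = d) {w : V → ℝ} {κ : ℝ}
    (hw : ∀ v, ∑ a ∈ univ.filter (fun a => src a = v), w (tgt a) = κ * w v) (α β : ℝ) :
    nonBacktrackingOp src tgt rev d (fun a => α * w (src a) + β * w (tgt a)) =
      fun a => -β / ((d : ℝ) - 1) * w (src a) + (α + κ * β / ((d : ℝ) - 1)) * w (tgt a) := by
  ext a
  rw [nonBacktrackingOp_apply, sum_add_distrib, ← mul_sum, ← mul_sum,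
    sum_nonBacktracking_comp_src src tgt rev hsrcrev hreg,
    sum_nonBacktracking_comp_tgt src tgt rev hsrcrev htgtrev hw]
  field_simp
  ring

theorem nonBacktrackingOp_comp_linearCombination [DecidableEq A]
    (hsrcrev : ∀ a, src (rev a) = tgt a) (htgtrev : ∀ a, tgt (rev a) = src a) {d : ℕ}
    (hd : (d : ℝ) - 1 ≠ 0)
    (hreg : ∀ v, (univ.filter fun a => src a = v).card = d) {w : V → ℝ} {κ : ℝ}
    (hw : ∀ v, ∑ a ∈ univ.filter (fun a => src a = v), w (tgt a) = κ * w v) :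
    nonBacktrackingOp src tgt rev d ∘ₗ
        Fintype.linearCombination ℝ ![fun a => w (src a), fun a => w (tgt a)] =
      Fintype.linearCombination ℝ ![fun a => w (src a), fun a => w (tgt a)] ∘ₗ
        vecMulLinear !![0, 1; -1 / ((d : ℝ) - 1), κ / ((d : ℝ) - 1)] := by
  refine LinearMap.ext fun c => ?_
  rw [LinearMap.comp_apply, LinearMap.comp_apply, linearCombination_comp_src_tgt_apply,
    linearCombination_comp_src_tgt_apply,
    nonBacktrackingOp_span_src_tgt src tgt rev hsrcrev htgtrev hd hreg hw]
  ext a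
  simp [vecMul, dotProduct, Fin.sum_univ_two]
  ring

end ArcGraph

/-- Old-space analysis of the arc graph: with `Bf(a) = f(a⁻)`, `Ef(a) = f(a⁺)`, `T` the
normalized adjacency operator of the `d`-regular graph and `T'` that of its arc graph,
one has `⟨Bf₁, Ef₂⟩ = d·⟨Tf₁, f₂⟩` and `T' ∘ B = E`; consequently, for an eigenfunction
`w` of `T` with eigenvalue `λ`, the span of `Bw` and `Ew` is `T'`-invariant, and every
eigenvalue of `T'` on this span is an eigenvalue of `[[0, 1], [-1/(d-1), dλ/(d-1)]]`. -/
theorem arc_graph_old_space {V A : Type*} [Fintype V] [Fintype A] [DecidableEq V]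
    [DecidableEq A]
    (src tgt : A → V) (rev : A → A)
    (hrev : ∀ a, rev (rev a) = a)
    (hsrcrev : ∀ a, src (rev a) = tgt a)
    (htgtrev : ∀ a, tgt (rev a) = src a)
    (d : ℕ) (hd : 2 < d)
    (hreg : ∀ v : V, (univ.filter fun a => src a = v).card = d) :
    (∀ f₁ f₂ : V → ℝ,
      (∑ a, f₁ (src a) * f₂ (tgt a)) =
        (d : ℝ) * ∑ v, ((∑ a ∈ univ.filter fun a => src a = v, f₁ (tgt a)) / (d : ℝ)) *
          f₂ v) ∧
    (∀ f : V → ℝ, ∀ a : A,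
      (∑ b ∈ univ.filter fun b => src b = tgt a ∧ b ≠ rev a, f (src b)) / ((d : ℝ) - 1) =
        f (tgt a)) ∧
    (∀ (w : V → ℝ) (lam : ℝ),
      (∀ v : V, (∑ a ∈ univ.filter fun a => src a = v, w (tgt a)) / (d : ℝ) = lam * w v) →
      (∀ α β : ℝ, ∃ α' β' : ℝ, ∀ a : A,
        (∑ b ∈ univ.filter fun b => src b = tgt a ∧ b ≠ rev a,
            (α * w (src b) + β * w (tgt b))) / ((d : ℝ) - 1) =
          α' * w (src a) + β' * w (tgt a)) ∧
      (∀ (μ : ℝ) (F : A → ℝ),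
        (∃ α β : ℝ, F = fun a => α * w (src a) + β * w (tgt a)) → F ≠ 0 →
        (∀ a : A,
          (∑ b ∈ univ.filter fun b => src b = tgt a ∧ b ≠ rev a, F b) / ((d : ℝ) - 1) =
            μ * F a) →
        ∃ u : Fin 2 → ℝ, u ≠ 0 ∧
          (!![0, 1; -1 / ((d : ℝ) - 1), (d : ℝ) * lam / ((d : ℝ) - 1)]).mulVec u =
            μ • u)) := by
  have hd2 : (2 : ℝ) < d := by exact_mod_cast hd
  have hd0 : (d : ℝ) ≠ 0 := by positivity
  have hd1 : (d : ℝ) - 1 ≠ 0 := by linarith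
  refine ⟨fun f₁ f₂ => ?_, fun f a => ?_, fun w lam hw => ?_⟩
  · rw [sum_src_mul_tgt src tgt rev hrev hsrcrev htgtrev, mul_sum]
    exact sum_congr rfl fun v _ => by field_simp
  · rw [sum_nonBacktracking_comp_src src tgt rev hsrcrev hreg, mul_div_cancel_left₀ _ hd1]
  have hw' : ∀ v, ∑ a ∈ univ.filter (fun a => src a = v), w (tgt a) = (d * lam) * w v :=
    fun v => by rw [mul_assoc, ← hw v, mul_div_cancel₀ _ hd0]
  refine ⟨fun α β => ⟨_, _, congrFun
    (nonBacktrackingOp_span_src_tgt src tgt rev hsrcrev htgtrev hd1 hreg hw' α β)⟩, ?_⟩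
  rintro μ F ⟨α, β, rfl⟩ hF hμ
  have hFc : Fintype.linearCombination ℝ ![fun a => w (src a), fun a => w (tgt a)] ![α, β] =
      fun a => α * w (src a) + β * w (tgt a) :=
    linearCombination_comp_src_tgt_apply src tgt w ![α, β]
  obtain ⟨c, hc_mem, hc⟩ := (Module.End.hasEigenvalue_of_comp_eq
    (nonBacktrackingOp_comp_linearCombination src tgt rev hsrcrev htgtrev hd1 hreg hw')
    (c := ![α, β]) (μ := μ) (hFc ▸ hF) (hFc ▸ funext hμ)).exists_hasEigenvector
  exact Matrix.exists_mulVec_eq_smul_of_vecMul_eq_smul hc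
    (Module.End.mem_eigenspace_iff.mp hc_mem)
end

section
/- Let G be a finite d-regular graph on n vertices with ‖T‖ ≤ 1 - α < 1 (T the normalized adjacency operator restricted to the complement of constants), let Q ⊆ V with μ = |Q|/n, and fix ε > 0. Then there exist constants c₁, c₂ > 0 depending only on d, α, μ, ε such that the proportion of walks of length ℓ (counted with the uniform random walk measure) that spend at least (μ + ε)·ℓ steps in Q is at most c₁·exp(-c₂·ℓ). -/
/-!
Exponential moment method. Tilt each vertex by `w = e^{t·1_Q}`: a walk with at least `s` steps
in `Q` has weight `∏ᵢ w(vᵢ) ≥ e^{ts}`, and the total weight of all walks of length `ℓ` is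
`n d^ℓ 𝔼 ((P D)^ℓ 1)`, where `P = A / d` and `D` is multiplication by `w`.

To bound `(P D)^ℓ 1`, follow a function through its mean and the rms norm of its centred part:
`P` fixes the mean and contracts the centred part by `1 - α`, while `D` multiplies the mean by
`𝔼 w = 1 + μ (e^t - 1)` and mixes the two parts only to order `e^t - 1`. Hence the potential
`|𝔼 f| + γ ‖f - 𝔼 f‖` grows by a factor at most `K = e^{(μ + ε/2) t}` per step when `t` is small
and `γ ≈ t / α`, and at `s = (μ + ε) ℓ` the proportion of heavy walks is at most
`e^{-ts} K^ℓ = e^{-εtℓ/2}`.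
-/

open Finset Matrix
open scoped BigOperators

namespace ExpanderWalk

variable {V : Type*}

section RootMeanSquare

variable [Fintype V]

noncomputable def rms (f : V → ℝ) : ℝ := √(𝔼 v, f v ^ 2)

lemma rms_eq_sqrt_sum_div (f : V → ℝ) : rms f = √(∑ v, f v ^ 2) / √(Fintype.card V) := by
  rw [rms, Fintype.expect_eq_sum_div_card, Real.sqrt_div' _ (Nat.cast_nonneg _)]

lemma rms_eq_norm_div (f : V → ℝ) :
    rms f = ‖(WithLp.toLp 2 f : EuclideanSpace ℝ V)‖ / √(Fintype.card V) := by
  simp [rms_eq_sqrt_sum_div, EuclideanSpace.norm_eq]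

lemma rms_nonneg (f : V → ℝ) : 0 ≤ rms f := Real.sqrt_nonneg _

lemma rms_add_le (f g : V → ℝ) : rms (f + g) ≤ rms f + rms g := by
  simp only [rms_eq_norm_div, WithLp.toLp_add, ← add_div]
  gcongr
  exact norm_add_le _ _

lemma rms_smul (c : ℝ) (f : V → ℝ) : rms (c • f) = |c| * rms f := by
  simp only [rms_eq_norm_div, WithLp.toLp_smul, norm_smul, Real.norm_eq_abs, mul_div_assoc]

lemma rms_const [Nonempty V] (c : ℝ) : rms (fun _ : V => c) = |c| := by
  simp [rms, Real.sqrt_sq_eq_abs]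

lemma rms_le_of_abs_le {f g : V → ℝ} (h : ∀ v, |f v| ≤ |g v|) : rms f ≤ rms g :=
  Real.sqrt_le_sqrt <| expect_le_expect fun v _ => sq_le_sq.mpr (h v)

lemma rms_mul_le {w : V → ℝ} {B : ℝ} (hB : 0 ≤ B) (hw : ∀ v, |w v| ≤ B) (f : V → ℝ) :
    rms (w * f) ≤ B * rms f := by
  calc rms (w * f) ≤ rms (B • f) := rms_le_of_abs_le fun v => by
        simpa [abs_mul, abs_of_nonneg hB] using mul_le_mul_of_nonneg_right (hw v) (abs_nonneg (f v))
    _ = B * rms f := by rw [rms_smul, abs_of_nonneg hB]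

lemma abs_expect_mul_le (f g : V → ℝ) : |𝔼 v, f v * g v| ≤ rms f * rms g := by
  have := Real.sum_mul_le_sqrt_mul_sqrt univ (fun v => |f v|) (fun v => |g v|)
  simp only [sq_abs, ← abs_mul] at this
  rw [rms_eq_sqrt_sum_div, rms_eq_sqrt_sum_div, Fintype.expect_eq_sum_div_card, abs_div,
    Nat.abs_cast, div_mul_div_comm, Real.mul_self_sqrt (Nat.cast_nonneg _)]
  gcongr
  exact (abs_sum_le_sum_abs _ _).trans this

noncomputable def centered (f : V → ℝ) : V → ℝ := fun v => f v - 𝔼 u, f u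

lemma sum_centered (f : V → ℝ) : ∑ v, centered f v = 0 := by
  unfold centered
  rw [sum_sub_distrib, sum_const, card_smul_expect, sub_self]

lemma eq_expect_add_centered (f : V → ℝ) (v : V) : f v = 𝔼 u, f u + centered f v := by
  simp [centered]

lemma expect_centered (f : V → ℝ) : 𝔼 v, centered f v = 0 := by
  rw [Fintype.expect_eq_sum_div_card, sum_centered, zero_div]

lemma rms_centered_le [Nonempty V] (f : V → ℝ) (c : ℝ) :
    rms (centered f) ≤ rms (fun v => f v - c) := by
  have key : 𝔼 v, (f v - c) ^ 2 = 𝔼 v, centered f v ^ 2 + (𝔼 u, f u - c) ^ 2 := by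
    have h : ∀ v, (f v - c) ^ 2 =
        centered f v ^ 2 + 2 * (𝔼 u, f u - c) * centered f v + (𝔼 u, f u - c) ^ 2 :=
      fun v => by simp only [centered]; ring
    simp only [h, expect_add_distrib, ← mul_expect, expect_centered, Fintype.expect_const]
    ring
  exact Real.sqrt_le_sqrt (by rw [key]; nlinarith [sq_nonneg (𝔼 u, f u - c)])

noncomputable def potential (γ : ℝ) (f : V → ℝ) : ℝ := |𝔼 v, f v| + γ * rms (centered f)

section Contraction

variable {P : Matrix V V ℝ}

lemma expect_mulVec (hP : 1 ᵥ* P = 1) (f : V → ℝ) : 𝔼 v, (P *ᵥ f) v = 𝔼 v, f v := by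
  simp only [Fintype.expect_eq_sum_div_card, ← one_dotProduct, dotProduct_mulVec, hP]

lemma centered_mulVec (hP₁ : P *ᵥ 1 = 1) (hP₂ : 1 ᵥ* P = 1) (f : V → ℝ) :
    centered (P *ᵥ f) = P *ᵥ centered f := by
  have : centered f = f - (𝔼 v, f v) • 1 := by ext; simp [centered]
  rw [this, mulVec_sub, mulVec_smul, hP₁]
  ext; simp [centered, expect_mulVec hP₂]

lemma potential_mulVec_le {ρ γ : ℝ} (hγ : 0 ≤ γ) (hP₁ : P *ᵥ 1 = 1) (hP₂ : 1 ᵥ* P = 1)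
    (hgap : ∀ f : V → ℝ, ∑ v, f v = 0 → rms (P *ᵥ f) ≤ ρ * rms f) (f : V → ℝ) :
    potential γ (P *ᵥ f) ≤ |𝔼 v, f v| + γ * ρ * rms (centered f) := by
  rw [potential, expect_mulVec hP₂, centered_mulVec hP₁ hP₂, mul_assoc]
  gcongr
  exact hgap _ (sum_centered f)

end Contraction

section Weight

variable [Nonempty V] {w : V → ℝ} {τ : ℝ}

lemma rms_sub_one_le (hw : ∀ v, |w v - 1| ≤ τ) : rms (fun v => w v - 1) ≤ τ := by
  have hτ : 0 ≤ τ := (abs_nonneg _).trans (hw (Classical.arbitrary V))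
  calc rms (fun v => w v - 1) ≤ rms (fun _ : V => τ) :=
        rms_le_of_abs_le fun v => (hw v).trans (le_abs_self τ)
    _ = τ := by rw [rms_const, abs_of_nonneg hτ]

lemma abs_expect_weight_mul_le (hw : ∀ v, |w v - 1| ≤ τ) (f : V → ℝ) :
    |𝔼 v, (w * f) v| ≤ |𝔼 v, w v| * |𝔼 v, f v| + τ * rms (centered f) := by
  have hsplit : 𝔼 v, (w * f) v = (𝔼 v, w v) * 𝔼 v, f v + 𝔼 v, (w v - 1) * centered f v := by
    have h : ∀ v, w v * f v = w v * 𝔼 u, f u + (w v - 1) * centered f v + centered f v :=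
      fun v => by rw [eq_expect_add_centered f v]; ring
    simp only [Pi.mul_apply, h, expect_add_distrib, expect_centered, ← expect_mul, add_zero]
  rw [hsplit, ← abs_mul]
  refine (abs_add_le _ _).trans ?_
  gcongr
  exact (abs_expect_mul_le _ _).trans
    (mul_le_mul_of_nonneg_right (rms_sub_one_le hw) (rms_nonneg _))

lemma rms_centered_weight_mul_le (hw : ∀ v, |w v - 1| ≤ τ) (f : V → ℝ) :
    rms (centered (w * f)) ≤ τ * |𝔼 v, f v| + (1 + τ) * rms (centered f) := by
  have hτ : 0 ≤ τ := (abs_nonneg _).trans (hw (Classical.arbitrary V))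
  have h : (fun v => (w * f) v - (𝔼 u, w u) * 𝔼 u, f u) =
      (𝔼 u, f u) • centered w + w * centered f := by
    ext v; simp only [Pi.mul_apply, Pi.add_apply, Pi.smul_apply, smul_eq_mul, centered]
    rw [eq_expect_add_centered f v]; simp only [centered]; ring
  have hw' : ∀ v, |w v| ≤ 1 + τ := fun v => by
    have := abs_sub_abs_le_abs_sub (w v) 1; rw [abs_one] at this; linarith [hw v]
  calc rms (centered (w * f))
      ≤ rms ((𝔼 u, f u) • centered w + w * centered f) := h ▸ rms_centered_le _ _
    _ ≤ |𝔼 u, f u| * rms (centered w) + (1 + τ) * rms (centered f) := by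
        rw [← rms_smul]
        exact (rms_add_le _ _).trans (by gcongr; exact rms_mul_le (by linarith) hw' _)
    _ ≤ τ * |𝔼 v, f v| + (1 + τ) * rms (centered f) := by
        rw [mul_comm τ]; gcongr
        exact (rms_centered_le w 1).trans (rms_sub_one_le hw)

end Weight

section Iteration

variable [Nonempty V] {P : Matrix V V ℝ} {w : V → ℝ} {ρ τ γ K : ℝ}

lemma potential_mulVec_weight_mul_le (hγ : 0 ≤ γ) (hρ : 0 ≤ ρ) (hP₁ : P *ᵥ 1 = 1)
    (hP₂ : 1 ᵥ* P = 1) (hgap : ∀ f : V → ℝ, ∑ v, f v = 0 → rms (P *ᵥ f) ≤ ρ * rms f)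
    (hw : ∀ v, |w v - 1| ≤ τ) (hK₁ : |𝔼 v, w v| + γ * ρ * τ ≤ K)
    (hK₂ : τ + γ * ρ * (1 + τ) ≤ γ * K) (f : V → ℝ) :
    potential γ (P *ᵥ (w * f)) ≤ K * potential γ f := by
  have hB := rms_nonneg (centered f)
  calc potential γ (P *ᵥ (w * f))
      ≤ |𝔼 v, (w * f) v| + γ * ρ * rms (centered (w * f)) := potential_mulVec_le hγ hP₁ hP₂ hgap _
    _ ≤ (|𝔼 v, w v| * |𝔼 v, f v| + τ * rms (centered f)) +
          γ * ρ * (τ * |𝔼 v, f v| + (1 + τ) * rms (centered f)) := by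
        gcongr
        exacts [abs_expect_weight_mul_le hw f, rms_centered_weight_mul_le hw f]
    _ = (|𝔼 v, w v| + γ * ρ * τ) * |𝔼 v, f v| + (τ + γ * ρ * (1 + τ)) * rms (centered f) := by
        ring
    _ ≤ K * |𝔼 v, f v| + γ * K * rms (centered f) := by gcongr
    _ = K * potential γ f := by rw [potential]; ring

lemma expect_pow_mulVec_one_le [DecidableEq V] (hγ : 0 ≤ γ) (hρ : 0 ≤ ρ) (hP₁ : P *ᵥ 1 = 1)
    (hP₂ : 1 ᵥ* P = 1) (hgap : ∀ f : V → ℝ, ∑ v, f v = 0 → rms (P *ᵥ f) ≤ ρ * rms f)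
    (hw : ∀ v, |w v - 1| ≤ τ) (hK₁ : |𝔼 v, w v| + γ * ρ * τ ≤ K)
    (hK₂ : τ + γ * ρ * (1 + τ) ≤ γ * K) (ℓ : ℕ) :
    𝔼 v, ((P * diagonal w) ^ ℓ *ᵥ 1) v ≤ K ^ ℓ := by
  have hτ : 0 ≤ τ := (abs_nonneg _).trans (hw (Classical.arbitrary V))
  have hK : 0 ≤ K := (add_nonneg (abs_nonneg _) (by positivity)).trans hK₁
  have hpot : ∀ ℓ : ℕ, potential γ ((P * diagonal w) ^ ℓ *ᵥ 1) ≤ K ^ ℓ := by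
    intro ℓ
    induction ℓ with
    | zero => simp [potential, centered, rms]
    | succ ℓ ih =>
      have hstep : (P * diagonal w) ^ (ℓ + 1) *ᵥ 1 = P *ᵥ (w * ((P * diagonal w) ^ ℓ *ᵥ 1)) := by
        rw [pow_succ', ← mulVec_mulVec, ← mulVec_mulVec]
        congr 1; ext v; simp [mulVec_diagonal]
      rw [hstep, pow_succ']
      exact (potential_mulVec_weight_mul_le hγ hρ hP₁ hP₂ hgap hw hK₁ hK₂ _).trans
        (mul_le_mul_of_nonneg_left ih hK)
  calc 𝔼 v, ((P * diagonal w) ^ ℓ *ᵥ 1) v ≤ potential γ ((P * diagonal w) ^ ℓ *ᵥ 1) :=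
        (le_abs_self _).trans (le_add_of_nonneg_right (mul_nonneg hγ (rms_nonneg _)))
    _ ≤ K ^ ℓ := hpot ℓ

end Iteration

end RootMeanSquare

section Walks

variable [Fintype V] [DecidableEq V] {R : Type*} [CommSemiring R]

lemma sum_prod_cons_eq_pow_mulVec_one (M : Matrix V V R) (ℓ : ℕ) (v : V) :
    ∑ u : Fin ℓ → V, ∏ i : Fin ℓ, M ((Fin.cons v u : Fin (ℓ + 1) → V) i.castSucc) (u i) =
      (M ^ ℓ *ᵥ 1) v := by
  induction ℓ generalizing v with
  | zero => simp
  | succ ℓ ih =>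
    rw [← (Fin.consEquiv fun _ => V).sum_comp, Fintype.sum_prod_type, pow_succ', ← mulVec_mulVec]
    simp only [Fin.consEquiv_apply, Fin.prod_univ_succ, Fin.castSucc_zero, Fin.cons_zero,
      ← Fin.succ_castSucc, Fin.cons_succ, ← mul_sum, ih]
    rfl

lemma sum_prod_eq_sum_pow_mulVec_one (M : Matrix V V R) (ℓ : ℕ) :
    ∑ u : Fin (ℓ + 1) → V, ∏ i : Fin ℓ, M (u i.castSucc) (u i.succ) = ∑ v, (M ^ ℓ *ᵥ 1) v := by
  rw [← (Fin.consEquiv fun _ => V).sum_comp, Fintype.sum_prod_type]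
  simp only [Fin.consEquiv_apply, Fin.cons_succ, sum_prod_cons_eq_pow_mulVec_one]

end Walks

section Graph

variable (G : SimpleGraph V) [DecidableRel G.Adj] {d : ℕ}

noncomputable def walkMatrix (d : ℕ) : Matrix V V ℝ := (d : ℝ)⁻¹ • G.adjMatrix ℝ

lemma adjMatrix_eq_smul_walkMatrix (hd : d ≠ 0) : G.adjMatrix ℝ = (d : ℝ) • walkMatrix G d := by
  simp [walkMatrix, smul_smul, hd]

variable [Fintype V]

lemma walkMatrix_mulVec_apply (f : V → ℝ) (v : V) :
    (walkMatrix G d *ᵥ f) v = (∑ w ∈ G.neighborFinset v, f w) / d := by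
  simp [walkMatrix, smul_mulVec, inv_mul_eq_div]

variable {G}

lemma walkMatrix_mulVec_one (hreg : G.IsRegularOfDegree d) (hd : d ≠ 0) :
    walkMatrix G d *ᵥ 1 = 1 := by
  ext v; simp [walkMatrix_mulVec_apply, hreg v, hd]

lemma one_vecMul_walkMatrix (hreg : G.IsRegularOfDegree d) (hd : d ≠ 0) :
    1 ᵥ* walkMatrix G d = 1 := by
  ext v; simp [walkMatrix, vecMul_smul, hreg v, hd]

lemma rms_walkMatrix_mulVec_le {ρ : ℝ}
    (hspec : ∀ f : V → ℝ, ∑ v, f v = 0 →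
      √(∑ v, ((∑ w ∈ G.neighborFinset v, f w) / (d : ℝ)) ^ 2) ≤ ρ * √(∑ v, f v ^ 2))
    (f : V → ℝ) (hf : ∑ v, f v = 0) : rms (walkMatrix G d *ᵥ f) ≤ ρ * rms f := by
  simp only [rms_eq_sqrt_sum_div, walkMatrix_mulVec_apply, ← mul_div_assoc]
  gcongr
  exact hspec f hf

end Graph

section Tilt

variable [DecidableEq V]

noncomputable def tilt (Q : Finset V) (t : ℝ) (v : V) : ℝ := if v ∈ Q then Real.exp t else 1

variable {Q : Finset V} {t : ℝ}

lemma abs_tilt_sub_one_le (ht : 0 ≤ t) (v : V) : |tilt Q t v - 1| ≤ Real.exp t - 1 := by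
  have := Real.add_one_le_exp t
  unfold tilt; split_ifs <;> simp [abs_of_nonneg (by linarith : 0 ≤ Real.exp t - 1)]; linarith

lemma expect_tilt [Fintype V] [Nonempty V] :
    𝔼 v, tilt Q t v = 1 + (#Q / Fintype.card V) * (Real.exp t - 1) := by
  rw [Fintype.expect_eq_sum_div_card]
  have hcard := card_filter_add_card_filter_not (s := univ) (fun v => v ∈ Q)
  simp only [tilt, sum_ite, sum_const, nsmul_eq_mul, mul_one]
  simp only [filter_univ_mem, card_univ] at hcard ⊢
  rw [← Nat.cast_inj (R := ℝ), Nat.cast_add] at hcard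
  field_simp
  linarith

lemma prod_tilt {ι : Type*} [Fintype ι] (u : ι → V) :
    ∏ i, tilt Q t (u i) = Real.exp (t * #{i | u i ∈ Q}) := by
  simp only [tilt, prod_ite, prod_const, one_pow, mul_one, ← Real.exp_nat_mul, mul_comm t]

end Tilt

lemma exists_tilt_parameters {ρ ε : ℝ} (hρ₀ : 0 ≤ ρ) (hρ₁ : ρ < 1) (hε : 0 < ε) :
    ∃ t > 0, ∃ γ ≥ 0, ∀ μ ∈ Set.Icc (0 : ℝ) 1,
      1 + μ * (Real.exp t - 1) + γ * ρ * (Real.exp t - 1) ≤ Real.exp ((μ + ε / 2) * t) ∧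
      Real.exp t - 1 + γ * ρ * Real.exp t ≤ γ * Real.exp ((μ + ε / 2) * t) := by
  set α := 1 - ρ
  have hα : 0 < α := by linarith
  set t := min (α / 4) (ε * α / 20)
  have ht : 0 < t := by positivity
  have htα : t ≤ α / 4 := min_le_left _ _
  have htε : t ≤ ε * α / 20 := min_le_right _ _
  have ht1 : |t| ≤ 1 := by rw [abs_of_pos ht]; linarith
  -- `t ≤ α / 4` keeps `γ ≤ 1` and lets the contraction absorb the mixing into the centred part;
  -- `t ≤ ε α / 20` keeps the second-order terms of the mean below `ε t / 2`.
  set γ := 4 * t / α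
  have hγα : γ * α = 4 * t := div_mul_cancel₀ _ hα.ne'
  have hγ1 : γ ≤ 1 := by rw [div_le_one hα]; linarith
  have hτ₀ : 0 ≤ Real.exp t - 1 := by linarith [Real.add_one_le_exp t]
  have hτ₁ : Real.exp t - 1 ≤ 2 * t := by
    simpa [abs_of_nonneg hτ₀, abs_of_pos ht] using Real.abs_exp_sub_one_le ht1
  have hτ₂ : Real.exp t - 1 ≤ t + t ^ 2 := by
    linarith [le_abs_self (Real.exp t - 1 - t), Real.abs_exp_sub_one_sub_id_le ht1]
  refine ⟨t, ht, γ, by positivity, fun μ ⟨hμ₀, hμ₁⟩ => ?_⟩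
  have hK := Real.add_one_le_exp ((μ + ε / 2) * t)
  constructor
  · nlinarith [mul_le_mul_of_nonneg_left hτ₂ hμ₀, mul_le_mul_of_nonneg_right hμ₁ (sq_nonneg t),
      mul_le_mul_of_nonneg_right (mul_le_of_le_one_right (by positivity : 0 ≤ γ) hρ₁.le) hτ₀,
      mul_le_mul_of_nonneg_left hτ₁ (by positivity : 0 ≤ γ)]
  · have hγρ : γ * ρ ≤ 1 := mul_le_one₀ hγ1 hρ₀ hρ₁.le
    have : Real.exp t - 1 + γ * ρ * Real.exp t ≤ γ := by
      nlinarith [mul_le_mul hτ₁ (by linarith : 1 + γ * ρ ≤ 2) (by positivity) (by positivity)]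
    exact this.trans (le_mul_of_one_le_right (by positivity) (Real.one_le_exp (by positivity)))

section Chernoff

variable [Fintype V] [DecidableEq V] {G : SimpleGraph V} [DecidableRel G.Adj] {d : ℕ}

lemma card_heavy_walks_mul_exp_le (Q : Finset V) {t : ℝ} (ht : 0 ≤ t) (ℓ : ℕ) (s : ℝ) :
    (#{u : Fin (ℓ + 1) → V | (∀ i : Fin ℓ, G.Adj (u i.castSucc) (u i.succ)) ∧
        s ≤ #{i : Fin ℓ | u i.succ ∈ Q}} : ℝ) * Real.exp (t * s) ≤
      ∑ u : Fin (ℓ + 1) → V, ∏ i : Fin ℓ,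
        (G.adjMatrix ℝ * diagonal (tilt Q t)) (u i.castSucc) (u i.succ) := by
  have hnonneg : ∀ u : Fin (ℓ + 1) → V,
      0 ≤ ∏ i : Fin ℓ, (G.adjMatrix ℝ * diagonal (tilt Q t)) (u i.castSucc) (u i.succ) :=
    fun u => prod_nonneg fun i _ => by
      simp only [mul_diagonal, SimpleGraph.adjMatrix_apply, tilt]
      split_ifs <;> positivity
  rw [← nsmul_eq_mul]
  refine (card_nsmul_le_sum _ _ _ fun u hu => ?_).trans
    (sum_le_sum_of_subset_of_nonneg (subset_univ _) fun u _ _ => hnonneg u)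
  obtain ⟨hwalk, hheavy⟩ := (mem_filter.mp hu).2
  simp only [mul_diagonal, SimpleGraph.adjMatrix_apply, hwalk, if_true, one_mul, prod_tilt]
  exact Real.exp_le_exp.mpr (mul_le_mul_of_nonneg_left hheavy ht)

lemma sum_walk_weights_eq (hd : d ≠ 0) (w : V → ℝ) (ℓ : ℕ) :
    ∑ u : Fin (ℓ + 1) → V, ∏ i : Fin ℓ, (G.adjMatrix ℝ * diagonal w) (u i.castSucc) (u i.succ) =
      Fintype.card V * d ^ ℓ * 𝔼 v, ((walkMatrix G d * diagonal w) ^ ℓ *ᵥ 1) v := by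
  rw [sum_prod_eq_sum_pow_mulVec_one, adjMatrix_eq_smul_walkMatrix G hd, smul_mul_assoc, smul_pow,
    smul_mulVec]
  simp only [Pi.smul_apply, smul_eq_mul]
  rw [← mul_sum, ← card_smul_expect, nsmul_eq_mul, card_univ]
  ring

lemma card_heavy_walks_div_le [Nonempty V] (hreg : G.IsRegularOfDegree d) (hd : d ≠ 0)
    {ρ : ℝ} (hρ : 0 ≤ ρ)
    (hspec : ∀ f : V → ℝ, ∑ v, f v = 0 →
      √(∑ v, ((∑ w ∈ G.neighborFinset v, f w) / (d : ℝ)) ^ 2) ≤ ρ * √(∑ v, f v ^ 2))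
    (Q : Finset V) {t γ K : ℝ} (ht : 0 ≤ t) (hγ : 0 ≤ γ)
    (hK₁ : 1 + (#Q / Fintype.card V) * (Real.exp t - 1) + γ * ρ * (Real.exp t - 1) ≤ K)
    (hK₂ : Real.exp t - 1 + γ * ρ * Real.exp t ≤ γ * K) (ℓ : ℕ) (s : ℝ) :
    (#{u : Fin (ℓ + 1) → V | (∀ i : Fin ℓ, G.Adj (u i.castSucc) (u i.succ)) ∧
        s ≤ #{i : Fin ℓ | u i.succ ∈ Q}} : ℝ) / (Fintype.card V * d ^ ℓ) ≤
      Real.exp (-(t * s)) * K ^ ℓ := by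
  have hτ : 0 ≤ Real.exp t - 1 := by linarith [Real.add_one_le_exp t]
  have hexpect := expect_pow_mulVec_one_le (K := K) hγ hρ (walkMatrix_mulVec_one hreg hd)
    (one_vecMul_walkMatrix hreg hd) (rms_walkMatrix_mulVec_le hspec)
    (abs_tilt_sub_one_le (Q := Q) ht)
    (by rwa [expect_tilt, abs_of_nonneg (by positivity)]) (by rwa [add_sub_cancel]) ℓ
  have hmarkov := card_heavy_walks_mul_exp_le (G := G) Q ht ℓ s
  rw [sum_walk_weights_eq hd] at hmarkov
  rw [div_le_iff₀ (by have := Nat.pos_of_ne_zero hd; positivity)]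
  calc _ = _ * Real.exp (t * s) * Real.exp (-(t * s)) := by
        rw [mul_assoc, ← Real.exp_add, add_neg_cancel, Real.exp_zero, mul_one]
    _ ≤ Fintype.card V * d ^ ℓ * K ^ ℓ * Real.exp (-(t * s)) := by
        gcongr ?_ * _
        exact hmarkov.trans (mul_le_mul_of_nonneg_left hexpect (by positivity))
    _ = _ := by ring

end Chernoff

end ExpanderWalk

open ExpanderWalk

/-- Chernoff-type large deviation estimate for random walks on expander graphs: for every
degree `d > 2`, spectral gap `α > 0`, density `μ` and `ε > 0` there are constants
`c₁, c₂ > 0` (depending only on `d, α, μ, ε`) such that for every finite `d`-regular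
graph `G` whose normalized adjacency operator has norm at most `1 - α` on the complement
of the constants, and every `Q ⊆ V` of density `μ`, the proportion of walks of length `ℓ`
spending at least `(μ + ε)·ℓ` steps in `Q` is at most `c₁·exp(-c₂·ℓ)`. -/
theorem expander_large_deviation (d : ℕ) (hd : 2 < d) (α : ℝ) (hα : 0 < α) (hα1 : α < 1)
    (μ ε : ℝ) (hε : 0 < ε) :
    ∃ c₁ : ℝ, 0 < c₁ ∧ ∃ c₂ : ℝ, 0 < c₂ ∧
      ∀ (V : Type) [Fintype V] [DecidableEq V] [Nonempty V]
        (G : SimpleGraph V) [DecidableRel G.Adj],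
        G.IsRegularOfDegree d →
        (∀ f : V → ℝ, (∑ v, f v) = 0 →
          Real.sqrt (∑ v, ((∑ w ∈ G.neighborFinset v, f w) / (d : ℝ)) ^ 2) ≤
            (1 - α) * Real.sqrt (∑ v, f v ^ 2)) →
        ∀ Q : Finset V, ((Q.card : ℝ) / (Fintype.card V : ℝ)) = μ →
        ∀ ℓ : ℕ,
          ((univ.filter fun w : Fin (ℓ + 1) → V =>
              (∀ i : Fin ℓ, G.Adj (w i.castSucc) (w i.succ)) ∧
              (μ + ε) * (ℓ : ℝ) ≤
                ((univ.filter fun i : Fin ℓ => w i.succ ∈ Q).card : ℝ)).card : ℝ) /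
            ((Fintype.card V : ℝ) * (d : ℝ) ^ ℓ) ≤
          c₁ * Real.exp (-c₂ * (ℓ : ℝ)) := by
  obtain ⟨t, ht, γ, hγ, hparam⟩ :=
    exists_tilt_parameters (ρ := 1 - α) (by linarith) (by linarith) hε
  refine ⟨1, one_pos, ε * t / 2, by positivity, ?_⟩
  intro V _ _ _ G _ hreg hspec Q hQ ℓ
  have hμ : μ ∈ Set.Icc (0 : ℝ) 1 := hQ ▸ ⟨by positivity,
    div_le_one_of_le₀ (mod_cast card_le_univ Q) (Nat.cast_nonneg _)⟩
  obtain ⟨hK₁, hK₂⟩ := hparam μ hμ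
  calc _ ≤ Real.exp (-(t * ((μ + ε) * ℓ))) * Real.exp ((μ + ε / 2) * t) ^ ℓ :=
        card_heavy_walks_div_le hreg (by omega) (by linarith) hspec Q ht.le hγ (hQ ▸ hK₁) hK₂ ℓ _
    _ = 1 * Real.exp (-(ε * t / 2) * ℓ) := by
        rw [← Real.exp_nat_mul, ← Real.exp_add, one_mul]; ring_nf
end
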